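/- arXiv:1301.6496 — 9 statements merged into one kernel-verified Lean document; each statement's English description precedes it below -/
import Mathlib

section
/- Let H be a Hadamard space and f : H → (−∞,∞] a proper convex lower semicontinuous function. Then f is bounded from below on every bounded subset of H. -/
open Metric Filter Set

/-- A Hadamard space structure on a complete metric space `H`: a geodesic
convex-combination map `comb x y t` (the point at parameter `t` on the geodesic
from `x` to `y`) satisfying the CAT(0) comparison inequality. -/
structure Hadamard (H : Type*) [MetricSpace H] where
  comb : H → H → ℝ → H
  dist_comb_left : ∀ x y : H, ∀ t ∈ Set.Icc (0:ℝ) 1, dist x (comb x y t) = t * dist x y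
  dist_comb_right : ∀ x y : H, ∀ t ∈ Set.Icc (0:ℝ) 1, dist (comb x y t) y = (1 - t) * dist x y
  cat0 : ∀ x y z : H, ∀ t ∈ Set.Icc (0:ℝ) 1,
    dist z (comb x y t) ^ 2 ≤
      (1 - t) * dist z x ^ 2 + t * dist z y ^ 2 - t * (1 - t) * dist x y ^ 2

variable {H : Type*} [MetricSpace H]

/-- A set is geodesically convex. -/
def GConvexSet (G : Hadamard H) (C : Set H) : Prop :=
  ∀ x ∈ C, ∀ y ∈ C, ∀ t ∈ Set.Icc (0:ℝ) 1, G.comb x y t ∈ C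

/-- A function `f : H → (-∞,∞]` is convex along geodesics. -/
def GConvexFn (G : Hadamard H) (f : H → EReal) : Prop :=
  ∀ x y : H, ∀ t ∈ Set.Icc (0:ℝ) 1,
    f (G.comb x y t) ≤ ((1 - t : ℝ) : EReal) * f x + ((t : ℝ) : EReal) * f y

/-- A proper convex lsc function on a Hadamard space is bounded from below on
every bounded set. -/
theorem bddBelow_on_bounded_of_convex_lsc
    [CompleteSpace H] (G : Hadamard H) (f : H → EReal)
    (hbot : ∀ x, f x ≠ ⊥) (hproper : ∃ x, f x ≠ ⊤)
    (hconv : GConvexFn G f) (hlsc : LowerSemicontinuous f)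
    (B : Set H) (hB : Bornology.IsBounded B) :
    ∃ m : ℝ, ∀ x ∈ B, (m : EReal) ≤ f x := by
  by_contra hcon
  push_neg at hcon
  obtain ⟨z, hz⟩ := hproper
  set r : ℝ := (f z).toReal with hr
  have hfz : f z = (r : EReal) := (EReal.coe_toReal hz (hbot z)).symm
  -- lsc at z: eventually f > r - 1 near z
  have hlz := hlsc z ((r - 1 : ℝ) : EReal) (by
    show _ < f z; rw [hfz]; exact_mod_cast sub_one_lt r)
  rw [Metric.eventually_nhds_iff] at hlz
  obtain ⟨δ, hδ, hball⟩ := hlz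
  -- bound for B around z
  obtain ⟨C, hC⟩ := hB.subset_closedBall z
  -- choose n
  obtain ⟨n, hn⟩ := exists_nat_gt (max (C / δ) (|r| + 1))
  have hn1 : (1 : ℝ) ≤ (n : ℝ) := by
    have := (le_max_right (C / δ) (|r| + 1)).trans hn.le
    have := abs_nonneg r
    linarith
  have hnpos : (0 : ℝ) < n := by linarith
  set t : ℝ := 1 / (n : ℝ) with ht
  have htpos : 0 < t := by positivity
  have ht1 : t ≤ 1 := by
    rw [ht, div_le_one hnpos]; exact hn1
  have htmem : t ∈ Set.Icc (0 : ℝ) 1 := ⟨htpos.le, ht1⟩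
  -- pick a bad point
  obtain ⟨x, hxB, hfx⟩ := hcon (-(n : ℝ) ^ 2)
  set y := G.comb z x t with hy
  -- y is in the δ-ball around z
  have hdy : dist z y < δ := by
    have h1 : dist z y = t * dist z x := G.dist_comb_left z x t htmem
    have h2 : dist z x ≤ C := by
      have := hC hxB
      rw [Metric.mem_closedBall] at this
      linarith [dist_comm z x ▸ this]
    have hCd : C / δ < n := (le_max_left _ _).trans_lt hn
    have : t * dist z x ≤ t * C := by
      apply mul_le_mul_of_nonneg_left h2 htpos.le
    have htC : t * C < δ := by
      rw [ht, div_mul_eq_mul_div, one_mul, div_lt_iff₀ hnpos]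
      calc C = (C / δ) * δ := by field_simp
        _ < n * δ := by exact mul_lt_mul_of_pos_right hCd hδ
        _ = δ * n := mul_comm _ _
    linarith
  have hlow := hball (by rwa [dist_comm] : dist y z < δ)
  -- convexity bound
  have hcv := hconv z x t htmem
  have h1 : ((1 - t : ℝ) : EReal) * f z = (((1 - t) * r : ℝ) : EReal) := by
    rw [hfz, ← EReal.coe_mul]
  have h2 : ((t : ℝ) : EReal) * f x ≤ ((- (n : ℝ) : ℝ) : EReal) := by
    have hle : f x ≤ ((-(n : ℝ) ^ 2 : ℝ) : EReal) := le_of_lt hfx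
    have := mul_le_mul_of_nonneg_left hle
      (by exact_mod_cast htpos.le : (0 : EReal) ≤ ((t : ℝ) : EReal))
    refine this.trans (le_of_eq ?_)
    rw [← EReal.coe_mul, EReal.coe_eq_coe_iff, ht]
    field_simp
  have hsum : f y ≤ (((1 - t) * r - (n : ℝ) : ℝ) : EReal) := by
    calc f y ≤ ((1 - t : ℝ) : EReal) * f z + ((t : ℝ) : EReal) * f x := hcv
      _ ≤ (((1 - t) * r : ℝ) : EReal) + ((-(n : ℝ) : ℝ) : EReal) := by
          rw [h1]; exact add_le_add_right h2 _
      _ = (((1 - t) * r - (n : ℝ) : ℝ) : EReal) := by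
          rw [← EReal.coe_add]; norm_num [sub_eq_add_neg]
  -- contradiction
  have hreal : (1 - t) * r - (n : ℝ) < r - 1 := by
    have habs : (|r| + 1 : ℝ) < n := (le_max_right _ _).trans_lt hn
    have h3 : -|r| ≤ t * r := by
      nlinarith [mul_le_mul_of_nonneg_left (neg_abs_le r) htpos.le,
        mul_le_mul_of_nonneg_right ht1 (abs_nonneg r)]
    nlinarith [abs_nonneg r]
  have : f y < f y := lt_of_le_of_lt (hsum.trans (by exact_mod_cast hreal.le)) hlow
  exact lt_irrefl _ this
end

section
/- Let H be a Hadamard space and f : H → (−∞,∞] a proper convex lower semicontinuous function. Then for each x₀ ∈ H there exist constants α, β ∈ ℝ such that f(x) ≥ α + β·d(x,x₀) for every x ∈ H. -/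
open Metric Filter Set

variable {H : Type*} [MetricSpace H]

/-- A proper convex lsc function on a Hadamard space has at most linear decay:
`f x ≥ α + β · d(x, x₀)`. -/
theorem exists_affine_minorant_of_convex_lsc
    [CompleteSpace H] (G : Hadamard H) (f : H → EReal)
    (hbot : ∀ x, f x ≠ ⊥) (hproper : ∃ x, f x ≠ ⊤)
    (hconv : GConvexFn G f) (hlsc : LowerSemicontinuous f)
    (x₀ : H) :
    ∃ α β : ℝ, ∀ x : H, ((α + β * dist x x₀ : ℝ) : EReal) ≤ f x := by
  obtain ⟨p, hp⟩ := hproper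
  obtain ⟨c, hc⟩ : ∃ c : ℝ, f p = (c : EReal) := by
    cases h : f p with
    | bot => exact absurd h (hbot p)
    | top => exact absurd h hp
    | coe c => exact ⟨c, rfl⟩
  have hev : ∀ᶠ y in nhds p, ((c - 1 : ℝ) : EReal) < f y := by
    apply hlsc p
    rw [hc]
    exact_mod_cast sub_one_lt c
  rw [Metric.eventually_nhds_iff] at hev
  obtain ⟨δ, hδ, hball⟩ := hev
  refine ⟨c - 1 + (-(2/δ)) * dist p x₀, -(2/δ), fun x => ?_⟩
  by_cases hd : dist x p < δ / 2
  · have h1 : ((c - 1 : ℝ) : EReal) < f x := by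
      apply hball; linarith
    refine le_trans (EReal.coe_le_coe_iff.mpr ?_) h1.le
    have h2 : 0 ≤ dist p x₀ := dist_nonneg
    have h3 : 0 ≤ dist x x₀ := dist_nonneg
    have h4 : 0 ≤ 2/δ := by positivity
    nlinarith
  · push_neg at hd
    have hdpos : 0 < dist x p := by linarith
    set s : ℝ := δ / (2 * dist x p) with hs_def
    have hs0 : 0 < s := by positivity
    have hs1 : s ≤ 1 := by
      rw [div_le_one (by positivity)]
      linarith
    have hsmem : s ∈ Set.Icc (0:ℝ) 1 := ⟨hs0.le, hs1⟩
    set z := G.comb p x s with hz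
    have hsd : s * (2 * dist x p) = δ := by
      rw [hs_def]; field_simp
    have hdz : dist z p < δ := by
      rw [dist_comm, G.dist_comb_left p x s hsmem, dist_comm p x]
      nlinarith
    have h1 : ((c - 1 : ℝ) : EReal) < f z := hball hdz
    have h2 : f z ≤ ((1 - s : ℝ) : EReal) * f p + ((s : ℝ) : EReal) * f x :=
      hconv p x s hsmem
    by_cases htop : f x = ⊤
    · rw [htop]; exact le_top
    obtain ⟨r, hr⟩ : ∃ r : ℝ, f x = (r : EReal) := by
      cases h : f x with
      | bot => exact absurd h (hbot x)
      | top => exact absurd h htop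
      | coe r => exact ⟨r, rfl⟩
    rw [hc, hr] at h2
    rw [hr]
    have h3 : ((c - 1 : ℝ) : EReal) < (((1 - s) * c + s * r : ℝ) : EReal) := by
      refine lt_of_lt_of_le h1 (le_trans h2 (le_of_eq ?_))
      push_cast
      ring
    rw [EReal.coe_lt_coe_iff] at h3
    rw [EReal.coe_le_coe_iff]
    have h4 : s * (r - c) > -1 := by nlinarith
    have h5 : δ * (r - c) > -(2 * dist x p) := by nlinarith
    have key : c - 2 * dist x p / δ ≤ r := by
      have h6 : c - r ≤ 2 * dist x p / δ := by
        rw [le_div_iff₀ hδ]; nlinarith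
      linarith
    have htri : dist x p ≤ dist x x₀ + dist p x₀ := by
      rw [dist_comm p x₀]; exact dist_triangle x x₀ p
    have hq : 0 ≤ 2/δ := by positivity
    have h7 := mul_le_mul_of_nonneg_left htri hq
    have h8 : (2/δ) * (dist x x₀ + dist p x₀) = (2/δ) * dist x x₀ + (2/δ) * dist p x₀ := by
      ring
    have h9 : 2 * dist x p / δ = (2/δ) * dist x p := by ring
    linarith
end

section
/- Let H be a Hadamard space, f : H → (−∞,∞] proper convex lower semicontinuous, λ > 0, x ∈ H, and J_λ(x) the resolvent (the minimizer of y ↦ f(y) + d(x,y)²/(2λ)). Then for every v ∈ dom f, (1/(2λ)) d(J_λ x, v)² − (1/(2λ)) d(x,v)² + (1/(2λ)) d(x, J_λ x)² + f(J_λ x) ≤ f(v). -/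
open Metric Filter Set

variable {H : Type*} [MetricSpace H]

/-- `y` is the resolvent point `J_lam x` of `f`: it minimizes
`z ↦ f z + d(x,z)^2/(2 lam)`. -/
def IsResolvent (f : H → EReal) (lam : ℝ) (x y : H) : Prop :=
  ∀ z : H, f y + ((dist x y ^ 2 / (2 * lam) : ℝ) : EReal)
    ≤ f z + ((dist x z ^ 2 / (2 * lam) : ℝ) : EReal)


lemma key_real (a b dxJ dxv dJv lam : ℝ) (hlam : 0 < lam)
    (h : ∀ t : ℝ, t ∈ Set.Ioc (0:ℝ) 1 →
      a + dxJ^2/(2*lam) ≤ (1-t)*a + t*b + ((1-t)*dxJ^2 + t*dxv^2 - t*(1-t)*dJv^2)/(2*lam)) :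
    dJv^2/(2*lam) - dxv^2/(2*lam) + dxJ^2/(2*lam) + a ≤ b := by
  apply le_of_forall_pos_le_add
  intro ε hε
  set k := dJv^2/(2*lam) with hk
  have hk0 : 0 ≤ k := by positivity
  set t := min 1 (ε/(k+1)) with ht
  have ht0 : 0 < t := lt_min one_pos (by positivity)
  have ht1 : t ≤ 1 := min_le_left _ _
  have htk : t * (k+1) ≤ ε := by
    have : t ≤ ε/(k+1) := min_le_right _ _
    calc t * (k+1) ≤ (ε/(k+1)) * (k+1) := by nlinarith
    _ = ε := by field_simp
  have h2 := h t ⟨ht0, ht1⟩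
  have hlam2 : (0:ℝ) < 2*lam := by linarith
  -- from h2: t*a + (t*dxJ^2 - t*dxv^2 + t*(1-t)*dJv^2)/(2*lam) ≤ t*b
  have h3 : a + (dxJ^2 - dxv^2 + (1-t)*dJv^2)/(2*lam) ≤ b := by
    have hinv : (0:ℝ) < (2*lam)⁻¹ := by positivity
    simp only [div_eq_mul_inv] at h2 ⊢
    nlinarith [h2, ht0, mul_pos ht0 hinv]
  have : dJv^2/(2*lam) - dxv^2/(2*lam) + dxJ^2/(2*lam) + a ≤ b + t*k := by
    have expand : (dxJ^2 - dxv^2 + (1-t)*dJv^2)/(2*lam)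
        = dxJ^2/(2*lam) - dxv^2/(2*lam) + dJv^2/(2*lam) - t*k := by
      rw [hk]; field_simp; ring
    linarith [h3, expand ▸ h3]
  nlinarith [this, htk, ht0]

/-- The resolvent variational inequality. -/
theorem resolvent_variational_inequality
    [CompleteSpace H] (G : Hadamard H) (f : H → EReal)
    (hbot : ∀ x, f x ≠ ⊥) (hproper : ∃ x, f x ≠ ⊤)
    (hconv : GConvexFn G f) (hlsc : LowerSemicontinuous f)
    (lam : ℝ) (hlam : 0 < lam) (x J : H)
    (hJ : IsResolvent f lam x J)
    (v : H) (hv : f v ≠ ⊤) :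
    ((dist J v ^ 2 / (2 * lam) - dist x v ^ 2 / (2 * lam)
        + dist x J ^ 2 / (2 * lam) : ℝ) : EReal) + f J ≤ f v := by
  -- f J is finite
  have hlam2 : (0:ℝ) < 2*lam := by linarith
  have hJtop : f J ≠ ⊤ := by
    intro htop
    have h1 := hJ v
    rw [htop] at h1
    have : (⊤ : EReal) ≤ f v + ((dist x v ^ 2 / (2 * lam) : ℝ) : EReal) := by
      simpa using h1
    have hlt : f v + ((dist x v ^ 2 / (2 * lam) : ℝ) : EReal) < ⊤ :=
      EReal.add_lt_top hv (EReal.coe_ne_top _)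
    exact absurd this hlt.not_ge
  have hfJ : ((f J).toReal : EReal) = f J := EReal.coe_toReal hJtop (hbot J)
  have hfv : ((f v).toReal : EReal) = f v := EReal.coe_toReal hv (hbot v)
  set rJ := (f J).toReal
  set rv := (f v).toReal
  rw [← hfJ, ← hfv, ← EReal.coe_add, EReal.coe_le_coe_iff]
  apply key_real rJ rv (dist x J) (dist x v) (dist J v) lam hlam
  intro t ht
  have htI : t ∈ Set.Icc (0:ℝ) 1 := ⟨ht.1.le, ht.2⟩
  set y := G.comb J v t with hy
  have h1 := hJ y
  rw [← hfJ] at h1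
  have h2 := hconv J v t htI
  rw [← hfJ, ← hfv] at h2
  have h2' : f y ≤ (((1-t)*rJ + t*rv : ℝ) : EReal) := by
    exact_mod_cast h2
  have h3 : ((rJ : EReal) + ((dist x J ^ 2 / (2 * lam) : ℝ) : EReal))
      ≤ (((1-t)*rJ + t*rv + dist x y ^ 2 / (2 * lam) : ℝ) : EReal) := by
    calc (rJ : EReal) + ((dist x J ^ 2 / (2 * lam) : ℝ) : EReal)
        ≤ f y + ((dist x y ^ 2 / (2 * lam) : ℝ) : EReal) := h1
      _ ≤ (((1-t)*rJ + t*rv : ℝ) : EReal) + ((dist x y ^ 2 / (2 * lam) : ℝ) : EReal) :=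
          add_le_add_left h2' _
      _ = (((1-t)*rJ + t*rv + dist x y ^ 2 / (2 * lam) : ℝ) : EReal) := by
          norm_cast
  rw [← EReal.coe_add, EReal.coe_le_coe_iff] at h3
  have hcat := G.cat0 J v x t htI
  have hdiv : dist x y ^ 2 / (2*lam) ≤
      ((1-t) * dist x J ^ 2 + t * dist x v ^ 2 - t*(1-t) * dist J v ^ 2) / (2*lam) := by
    exact div_le_div_of_nonneg_right hcat hlam2.le
  linarith
end

section
/- Let H be a Hadamard space and C ⊆ H a closed convex set. If (x_n) ⊆ C is a bounded sequence converging weakly to x ∈ H, then x ∈ C. -/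
open Metric Filter Set

variable {H : Type*} [MetricSpace H]

/-- Weak convergence in a Hadamard space: for every geodesic segment emanating
from `x`, the metric projections of `u n` onto that segment converge to `x`. -/
def WeakConvTo (G : Hadamard H) (u : ℕ → H) (x : H) : Prop :=
  Bornology.IsBounded (Set.range u) ∧
  ∀ y : H, ∀ p : ℕ → H,
    (∀ n, p n ∈ (fun t => G.comb x y t) '' Set.Icc (0:ℝ) 1 ∧
      ∀ q ∈ (fun t => G.comb x y t) '' Set.Icc (0:ℝ) 1, dist (u n) (p n) ≤ dist (u n) q) →
    Tendsto p atTop (nhds x)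

/-- Closed convex sets in Hadamard spaces are sequentially weakly closed. -/
theorem weak_limit_mem_of_closed_convex
    [CompleteSpace H] (G : Hadamard H) (C : Set H)
    (hcl : IsClosed C) (hcv : GConvexSet G C)
    (u : ℕ → H) (hu : ∀ n, u n ∈ C) (x : H)
    (hw : WeakConvTo G u x) :
    x ∈ C := by
  classical
  obtain ⟨-, hproj⟩ := hw
  have hCne : C.Nonempty := ⟨u 0, hu 0⟩
  set S : Set ℝ := (dist x) '' C with hS
  have hSne : S.Nonempty := hCne.image _
  have hSbd : BddBelow S := ⟨0, by rintro r ⟨z, -, rfl⟩; exact dist_nonneg⟩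
  set d : ℝ := sInf S with hd
  have hd0 : 0 ≤ d := le_csInf hSne (by rintro r ⟨z, -, rfl⟩; exact dist_nonneg)
  have hdle : ∀ z ∈ C, d ≤ dist x z := fun z hz => csInf_le hSbd ⟨z, hz, rfl⟩
  -- minimizing sequence
  have hseq : ∀ n : ℕ, ∃ z, z ∈ C ∧ dist x z < d + 1 / (n + 1) := by
    intro n
    have hlt : d < d + 1 / ((n : ℝ) + 1) := by
      have : (0:ℝ) < 1 / ((n : ℝ) + 1) := by positivity
      linarith
    obtain ⟨r, ⟨z, hz, rfl⟩, hrd⟩ := exists_lt_of_csInf_lt hSne hlt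
    exact ⟨z, hz, hrd⟩
  choose z hzC hzd using hseq
  -- key quadrilateral inequality from CAT(0) applied to midpoints
  have key : ∀ a ∈ C, ∀ b ∈ C,
      dist a b ^ 2 ≤ 2 * dist x a ^ 2 + 2 * dist x b ^ 2 - 4 * d ^ 2 := by
    intro a ha b hb
    have ht : (1/2 : ℝ) ∈ Set.Icc (0:ℝ) 1 := by norm_num
    have hm := G.cat0 a b x (1/2) ht
    have hmC : G.comb a b (1/2) ∈ C := hcv a ha b hb _ ht
    have h1 := hdle _ hmC
    have h2 : d ^ 2 ≤ dist x (G.comb a b (1/2)) ^ 2 := by nlinarith [dist_nonneg (x := x) (y := G.comb a b (1/2))]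
    nlinarith
  -- the minimizing sequence is Cauchy
  have hcauchy : CauchySeq z := by
    refine cauchySeq_of_le_tendsto_0
      (fun N => Real.sqrt (8 * d * (1 / (N + 1)) + 4 * (1 / (N + 1)) ^ 2)) ?_ ?_
    · intro n m N hn hm
      have hbN : (0:ℝ) ≤ 8 * d * (1 / (N + 1)) + 4 * (1 / (N + 1)) ^ 2 := by positivity
      rw [show dist (z n) (z m) = Real.sqrt (dist (z n) (z m) ^ 2) by
        rw [Real.sqrt_sq dist_nonneg]]
      apply Real.sqrt_le_sqrt
      have hk := key (z n) (hzC n) (z m) (hzC m)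
      have hεn : (1:ℝ) / (n + 1) ≤ 1 / (N + 1) := by
        apply one_div_le_one_div_of_le (by positivity)
        have : (N:ℝ) ≤ n := by exact_mod_cast hn
        linarith
      have hεm : (1:ℝ) / (m + 1) ≤ 1 / (N + 1) := by
        apply one_div_le_one_div_of_le (by positivity)
        have : (N:ℝ) ≤ m := by exact_mod_cast hm
        linarith
      have hεn0 : (0:ℝ) < 1 / ((n:ℝ) + 1) := by positivity
      have hεm0 : (0:ℝ) < 1 / ((m:ℝ) + 1) := by positivity
      have h1 := hzd n
      have h2 := hzd m
      have h3 := hdle _ (hzC n)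
      have h4 := hdle _ (hzC m)
      nlinarith [sq_nonneg (1 / ((n:ℝ) + 1) - 1 / ((m:ℝ) + 1))]
    · have ht : Tendsto (fun N : ℕ => 8 * d * (1 / (N + 1)) + 4 * (1 / (N + 1 : ℝ)) ^ 2)
          atTop (nhds 0) := by
        have h1 := tendsto_one_div_add_atTop_nhds_zero_nat (𝕜 := ℝ)
        have := ((h1.const_mul (8 * d)).add ((h1.pow 2).const_mul 4))
        simpa using this
      have := (Real.continuous_sqrt.tendsto 0).comp ht
      simpa [Real.sqrt_zero, Function.comp_def] using this
  -- limit point: the projection of x onto C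
  obtain ⟨y, hy⟩ := cauchySeq_tendsto_of_complete hcauchy
  have hyC : y ∈ C := hcl.isSeqClosed hzC hy
  have hxy : dist x y = d := by
    apply le_antisymm
    · have hlim : Tendsto (fun n => dist x (z n)) atTop (nhds (dist x y)) :=
        (continuous_dist.comp (Continuous.prodMk_right x)).continuousAt.tendsto.comp hy |>.congr
          (fun n => rfl)
      have hlim2 : Tendsto (fun n : ℕ => d + 1 / (n + 1 : ℝ)) atTop (nhds d) := by
        have h1 := tendsto_one_div_add_atTop_nhds_zero_nat (𝕜 := ℝ)
        simpa using (tendsto_const_nhds (x := d)).add h1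
      exact le_of_tendsto_of_tendsto hlim hlim2
        (Eventually.of_forall fun n => (hzd n).le)
    · exact hdle y hyC
  -- obtuse-angle inequality at a nearest point
  have obtuse : ∀ w : H, (∀ zc ∈ C, dist w y ≤ dist w zc) → ∀ v ∈ C,
      dist w y ^ 2 + dist y v ^ 2 ≤ dist w v ^ 2 := by
    intro w hwmin v hv
    have hstep : ∀ s : ℝ, 0 < s → s ≤ 1 →
        dist w y ^ 2 + (1 - s) * dist y v ^ 2 ≤ dist w v ^ 2 := by
      intro s hs0 hs1
      have hsI : s ∈ Set.Icc (0:ℝ) 1 := ⟨hs0.le, hs1⟩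
      have hc := G.cat0 y v w s hsI
      have hmem : G.comb y v s ∈ C := hcv y hyC v hv s hsI
      have h1 : dist w y ≤ dist w (G.comb y v s) := hwmin _ hmem
      have h2 : dist w y ^ 2 ≤ dist w (G.comb y v s) ^ 2 :=
        pow_le_pow_left₀ dist_nonneg h1 2
      nlinarith
    have hlim : Tendsto (fun n : ℕ => dist w y ^ 2 + (1 - 1 / (n + 1 : ℝ)) * dist y v ^ 2)
        atTop (nhds (dist w y ^ 2 + dist y v ^ 2)) := by
      have h1 := tendsto_one_div_add_atTop_nhds_zero_nat (𝕜 := ℝ)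
      have : Tendsto (fun n : ℕ => (1 - 1 / (n + 1 : ℝ))) atTop (nhds 1) := by
        simpa using (tendsto_const_nhds (x := (1:ℝ))).sub h1
      simpa using (tendsto_const_nhds (x := dist w y ^ 2)).add
        (this.mul (tendsto_const_nhds (x := dist y v ^ 2)))
    refine le_of_tendsto hlim (Eventually.of_forall fun n => ?_)
    exact hstep (1 / (n + 1)) (by positivity) (by
      rw [div_le_one (by positivity)]; linarith [Nat.cast_nonneg (α := ℝ) n])
  -- points on the geodesic from x to y have y as nearest point of C
  have hnear : ∀ t ∈ Set.Icc (0:ℝ) 1, ∀ zc ∈ C,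
      dist (G.comb x y t) y ≤ dist (G.comb x y t) zc := by
    intro t ht zc hzc
    have h1 : dist (G.comb x y t) y = (1 - t) * d := by
      rw [G.dist_comb_right x y t ht, hxy]
    have h2 : dist x (G.comb x y t) = t * d := by
      rw [G.dist_comb_left x y t ht, hxy]
    have h3 : dist x zc ≤ dist x (G.comb x y t) + dist (G.comb x y t) zc := dist_triangle _ _ _
    have h4 := hdle zc hzc
    rw [h1]; rw [h2] at h3; linarith
  -- conclude: the constant sequence `y` is the projection sequence
  have hy1 : G.comb x y 1 = y := by
    have := G.dist_comb_right x y 1 ⟨zero_le_one, le_refl 1⟩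
    rw [show (1:ℝ) - 1 = 0 by ring, zero_mul] at this
    exact dist_eq_zero.mp this
  have hmain : Tendsto (fun _ : ℕ => y) atTop (nhds x) := by
    apply hproj y (fun _ => y)
    intro n
    constructor
    · exact ⟨1, ⟨zero_le_one, le_refl 1⟩, hy1⟩
    · rintro q ⟨t, ht, rfl⟩
      have ho := obtuse (G.comb x y t) (hnear t ht) (u n) (hu n)
      have h1 : dist y (u n) ^ 2 ≤ dist (G.comb x y t) (u n) ^ 2 := by
        nlinarith [sq_nonneg (dist (G.comb x y t) y)]
      have h2 : dist y (u n) ≤ dist (G.comb x y t) (u n) := by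
        nlinarith [dist_nonneg (x := y) (y := u n),
          dist_nonneg (x := G.comb x y t) (y := u n)]
      rw [dist_comm (u n) y, dist_comm (u n) (G.comb x y t)]
      exact h2
  have : y = x := tendsto_nhds_unique tendsto_const_nhds hmain
  rwa [← this]
end

section
/- Every bounded sequence in a Hadamard space has a weakly convergent subsequence. -/
open Metric Filter Set Topology

variable {H : Type*} [MetricSpace H]

namespace HW
variable {H : Type*} [MetricSpace H] (G : Hadamard H)

lemma comb_unique {x y m : H} {t : ℝ} (ht : t ∈ Set.Icc (0:ℝ) 1)
    (h1 : dist x m = t * dist x y) (h2 : dist m y = (1 - t) * dist x y) :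
    m = G.comb x y t := by
  have hc := G.cat0 x y m t ht
  rw [dist_comm m x] at hc
  rw [h1] at hc
  rw [h2] at hc
  have hd : dist m (G.comb x y t) ^ 2 ≤ 0 := by nlinarith
  have : dist m (G.comb x y t) = 0 := by nlinarith [dist_nonneg (x := m) (y := G.comb x y t)]
  exact dist_eq_zero.mp this

lemma seg_dist {x y : H} {s t : ℝ} (hs : s ∈ Set.Icc (0:ℝ) 1) (ht : t ∈ Set.Icc (0:ℝ) 1)
    (hst : s ≤ t) :
    dist (G.comb x y s) (G.comb x y t) = (t - s) * dist x y := by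
  have h1 := G.dist_comb_left x y s hs
  have h2 := G.dist_comb_left x y s hs
  have h3 := G.dist_comb_right x y s hs
  have h4 := G.dist_comb_left x y t ht
  have h5 := G.dist_comb_right x y t ht
  have hc := G.cat0 x y (G.comb x y s) t ht
  rw [dist_comm (G.comb x y s) x, h1, h3] at hc
  -- hc : dist (comb s) (comb t) ^2 ≤ (1-t)(s d)^2 + t((1-s)d)^2 - t(1-t) d^2 = (t-s)^2 d^2
  have hub : dist (G.comb x y s) (G.comb x y t) ≤ (t - s) * dist x y := by
    nlinarith [dist_nonneg (x := G.comb x y s) (y := G.comb x y t), dist_nonneg (x := x) (y := y),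
      sq_nonneg (dist (G.comb x y s) (G.comb x y t) + (t - s) * dist x y),
      mul_nonneg (sub_nonneg.mpr hst) (dist_nonneg (x := x) (y := y))]
  have hlb : (t - s) * dist x y ≤ dist (G.comb x y s) (G.comb x y t) := by
    have htr := dist_triangle4 x (G.comb x y s) (G.comb x y t) y
    rw [h1, h5] at htr
    linarith
  linarith

lemma comb_zero (x y : H) : G.comb x y 0 = x := by
  have := G.dist_comb_left x y 0 ⟨le_refl _, zero_le_one⟩
  rw [zero_mul] at this
  exact (dist_eq_zero.mp this).symm

lemma comb_half {x y : H} {s : ℝ} (hs : s ∈ Set.Icc (0:ℝ) 1) :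
    G.comb x (G.comb x y s) (1/2) = G.comb x y (s/2) := by
  have hs2 : s/2 ∈ Set.Icc (0:ℝ) 1 := ⟨by linarith [hs.1], by linarith [hs.2]⟩
  have hxy := G.dist_comb_left x y s hs
  have h1 : dist x (G.comb x y (s/2)) = (1/2) * dist x (G.comb x y s) := by
    rw [G.dist_comb_left x y (s/2) hs2, hxy]; ring
  have h2 : dist (G.comb x y (s/2)) (G.comb x y s) = (1 - 1/2) * dist x (G.comb x y s) := by
    rw [seg_dist G hs2 hs (by linarith [hs.1]), hxy]; ring
  exact ((comb_unique G ⟨by norm_num, by norm_num⟩ h1 h2)).symm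

lemma seg_compact (x y : H) :
    IsCompact ((fun t => G.comb x y t) '' Set.Icc (0:ℝ) 1) := by
  refine isCompact_Icc.image_of_continuousOn ?_
  refine LipschitzOnWith.continuousOn
    (K := Real.toNNReal (dist x y)) (LipschitzOnWith.of_dist_le_mul ?_)
  intro s hs t ht
  rcases le_total s t with h | h
  · rw [seg_dist G hs ht h, Real.coe_toNNReal _ dist_nonneg, Real.dist_eq,
      abs_of_nonpos (by linarith : s - t ≤ 0)]
    ring_nf
    exact le_of_eq (by ring)
  · rw [dist_comm, seg_dist G ht hs h, Real.coe_toNNReal _ dist_nonneg, Real.dist_eq,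
      abs_of_nonneg (by linarith : 0 ≤ s - t)]
    exact le_of_eq (by ring)





lemma ev_bddU {a : ℕ → ℝ} {M : ℝ} (h : ∀ n, a n ≤ M) :
    IsBoundedUnder (· ≤ ·) atTop a := isBoundedUnder_of ⟨M, h⟩

lemma cobdd {a : ℕ → ℝ} (h : ∀ n, 0 ≤ a n) :
    IsCoboundedUnder (· ≤ ·) atTop a := isCoboundedUnder_le_of_le atTop h

lemma limsup_nonneg {a : ℕ → ℝ} {M : ℝ} (h0 : ∀ n, 0 ≤ a n) (hM : ∀ n, a n ≤ M) :
    0 ≤ limsup a atTop :=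
  le_limsup_of_frequently_le (Frequently.of_forall h0) (ev_bddU hM)

lemma limsup_le_bound {a : ℕ → ℝ} {C : ℝ} (h0 : ∀ n, 0 ≤ a n) (h : ∀ n, a n ≤ C) :
    limsup a atTop ≤ C := limsup_le_of_le (cobdd h0) (Eventually.of_forall h)

lemma limsup_mono2 {a b : ℕ → ℝ} {M : ℝ} (h : ∀ n, a n ≤ b n) (h0 : ∀ n, 0 ≤ a n)
    (hM : ∀ n, b n ≤ M) : limsup a atTop ≤ limsup b atTop :=
  limsup_le_limsup (Eventually.of_forall h) (cobdd h0) (ev_bddU hM)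

lemma limsup_combo {f a b : ℕ → ℝ} {s t c Ma Mb : ℝ} (hs : 0 ≤ s) (ht : 0 ≤ t)
    (hf0 : ∀ n, 0 ≤ f n) (haM : ∀ n, a n ≤ Ma) (hbM : ∀ n, b n ≤ Mb)
    (h : ∀ n, f n ≤ s * a n + t * b n + c) :
    limsup f atTop ≤ s * limsup a atTop + t * limsup b atTop + c := by
  refine le_of_forall_pos_le_add fun δ hδ => ?_
  set La := limsup a atTop with hLa
  set Lb := limsup b atTop with hLb
  have hε : 0 < δ / (s + t + 1) := by positivity
  have h1 : ∀ᶠ n in atTop, a n < La + δ / (s + t + 1) :=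
    eventually_lt_of_limsup_lt (by linarith) (ev_bddU haM)
  have h2 : ∀ᶠ n in atTop, b n < Lb + δ / (s + t + 1) :=
    eventually_lt_of_limsup_lt (by linarith) (ev_bddU hbM)
  have hf0' : ∀ n, (0:ℝ) ≤ f n := hf0
  refine limsup_le_of_le (cobdd hf0) ?_
  filter_upwards [h1, h2] with n hn1 hn2
  have h3 : (0:ℝ) < s + t + 1 := by linarith
  have hst : (s + t) * (δ / (s + t + 1)) ≤ δ := by
    calc (s + t) * (δ / (s + t + 1)) = ((s + t) / (s + t + 1)) * δ := by ring
      _ ≤ 1 * δ := mul_le_mul_of_nonneg_right ((div_le_one h3).mpr (by linarith)) hδ.le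
      _ = δ := one_mul δ
  have := h n
  nlinarith [mul_le_mul_of_nonneg_left (le_of_lt hn1) hs,
    mul_le_mul_of_nonneg_left (le_of_lt hn2) ht]

lemma limsup_subseq_le {a : ℕ → ℝ} {M : ℝ} {g : ℕ → ℕ} (hg : Tendsto g atTop atTop)
    (h0 : ∀ n, 0 ≤ a n) (hM : ∀ n, a n ≤ M) :
    limsup (fun n => a (g n)) atTop ≤ limsup a atTop := by
  have e : limsup (fun n => a (g n)) atTop = limsup a (map g atTop) :=
    limsup_comp a g atTop
  rw [e]
  haveI : NeBot (map g atTop) := map_neBot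
  exact limsup_le_limsup_of_le hg (isCoboundedUnder_le_of_le _ h0) (ev_bddU hM)

lemma limsup_shift {a : ℕ → ℝ} (k : ℕ) :
    limsup (fun n => a (n + k)) atTop = limsup a atTop := by
  have e : limsup (fun n => a (n + k)) atTop = limsup a (map (fun n => n + k) atTop) :=
    limsup_comp a (fun n => n + k) atTop
  rw [e, map_add_atTop_eq_nat]


noncomputable def d2 (v : ℕ → H) (x : H) : ℝ := limsup (fun n => dist (v n) x ^ 2) atTop
noncomputable def r2 (v : ℕ → H) : ℝ := sInf (Set.range (d2 v))
noncomputable def rsub (v : ℕ → H) : ℝ :=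
  sInf {r | ∃ φ : ℕ → ℕ, StrictMono φ ∧ r2 (v ∘ φ) = r}

variable {c : H} {R : ℝ} {v : ℕ → H}

lemma dist_sq_le (hv : ∀ n, dist (v n) c ≤ R) (x : H) (n : ℕ) :
    dist (v n) x ^ 2 ≤ (R + dist c x) ^ 2 := by
  have h1 : dist (v n) x ≤ R + dist c x :=
    le_trans (dist_triangle (v n) c x) (by linarith [hv n])
  exact pow_le_pow_left₀ dist_nonneg h1 2

lemma d2_nonneg (hv : ∀ n, dist (v n) c ≤ R) (x : H) : 0 ≤ d2 v x :=
  limsup_nonneg (fun n => sq_nonneg _) (dist_sq_le hv x)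

lemma r2_le_d2 (hv : ∀ n, dist (v n) c ≤ R) (x : H) : r2 v ≤ d2 v x := by
  refine csInf_le ⟨0, ?_⟩ ⟨x, rfl⟩
  rintro r ⟨x', rfl⟩
  exact d2_nonneg hv x'

lemma r2_nonneg (hv : ∀ n, dist (v n) c ≤ R) : 0 ≤ r2 v := by
  refine le_csInf ⟨d2 v c, c, rfl⟩ ?_
  rintro r ⟨x, rfl⟩
  exact d2_nonneg hv x

lemma d2_subseq_le (hv : ∀ n, dist (v n) c ≤ R) {g : ℕ → ℕ} (hg : Tendsto g atTop atTop)
    (x : H) : d2 (v ∘ g) x ≤ d2 v x :=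
  limsup_subseq_le (a := fun n => dist (v n) x ^ 2) (M := (R + dist c x) ^ 2) hg
    (fun n => sq_nonneg _) (dist_sq_le hv x)

lemma r2_subseq_le (hv : ∀ n, dist (v n) c ≤ R) {g : ℕ → ℕ} (hg : Tendsto g atTop atTop) :
    r2 (v ∘ g) ≤ r2 v := by
  refine le_csInf ⟨d2 v c, c, rfl⟩ ?_
  rintro r ⟨x, rfl⟩
  exact le_trans (r2_le_d2 (fun n => hv (g n)) x) (d2_subseq_le hv hg x)

lemma d2_shift (k : ℕ) (x : H) : d2 (fun n => v (n + k)) x = d2 v x :=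
  limsup_shift (a := fun n => dist (v n) x ^ 2) k

lemma r2_shift (k : ℕ) : r2 (fun n => v (n + k)) = r2 v := by
  unfold r2
  congr 1
  ext r
  constructor
  · rintro ⟨x, rfl⟩; exact ⟨x, (d2_shift k x).symm⟩
  · rintro ⟨x, rfl⟩; exact ⟨x, d2_shift k x⟩

lemma d2_lip (hv : ∀ n, dist (v n) c ≤ R) (x x' : H) :
    d2 v x' ≤ d2 v x + 2 * (R + dist c x) * dist x x' + dist x x' ^ 2 := by
  have h := limsup_combo (f := fun n => dist (v n) x' ^ 2) (a := fun n => dist (v n) x ^ 2)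
    (b := fun _ => (0:ℝ)) (s := 1) (t := 0)
    (c := 2 * (R + dist c x) * dist x x' + dist x x' ^ 2)
    (Ma := (R + dist c x) ^ 2) (Mb := 0)
    one_pos.le (le_refl 0) (fun n => sq_nonneg _) (dist_sq_le hv x) (fun _ => le_refl 0)
    (fun n => ?_)
  · rw [limsup_const (0:ℝ)] at h
    calc d2 v x' ≤ 1 * d2 v x + 0 * 0 + (2 * (R + dist c x) * dist x x' + dist x x' ^ 2) := h
      _ = d2 v x + 2 * (R + dist c x) * dist x x' + dist x x' ^ 2 := by ring
  · have h1 : dist (v n) x' ≤ dist (v n) x + dist x x' := dist_triangle _ _ _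
    have h2 : dist (v n) x ≤ R + dist c x :=
      le_trans (dist_triangle (v n) c x) (by linarith [hv n])
    have h3 : dist (v n) x' ^ 2 ≤ (dist (v n) x + dist x x') ^ 2 :=
      pow_le_pow_left₀ dist_nonneg h1 2
    have h4 : dist (v n) x * dist x x' ≤ (R + dist c x) * dist x x' :=
      mul_le_mul_of_nonneg_right h2 dist_nonneg
    show dist (v n) x' ^ 2 ≤
      1 * dist (v n) x ^ 2 + 0 * 0 + (2 * (R + dist c x) * dist x x' + dist x x' ^ 2)
    nlinarith [h3, h4]

lemma d2_strong (G : Hadamard H) (hv : ∀ n, dist (v n) c ≤ R) (x y : H) :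
    d2 v (G.comb x y (1/2)) ≤
      (1/2) * d2 v x + (1/2) * d2 v y - (1/4) * dist x y ^ 2 := by
  have h := limsup_combo (f := fun n => dist (v n) (G.comb x y (1/2)) ^ 2)
    (a := fun n => dist (v n) x ^ 2) (b := fun n => dist (v n) y ^ 2)
    (s := 1/2) (t := 1/2) (c := -((1/4) * dist x y ^ 2))
    (Ma := (R + dist c x) ^ 2) (Mb := (R + dist c y) ^ 2)
    (by norm_num) (by norm_num) (fun n => sq_nonneg _) (dist_sq_le hv x) (dist_sq_le hv y)
    (fun n => ?_)
  · calc d2 v (G.comb x y (1/2)) ≤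
        1/2 * d2 v x + 1/2 * d2 v y + -((1/4) * dist x y ^ 2) := h
      _ = (1/2) * d2 v x + (1/2) * d2 v y - (1/4) * dist x y ^ 2 := by ring
  · have hc := G.cat0 x y (v n) (1/2) ⟨by norm_num, by norm_num⟩
    show dist (v n) (G.comb x y (1/2)) ^ 2 ≤
      1/2 * dist (v n) x ^ 2 + 1/2 * dist (v n) y ^ 2 + -((1/4) * dist x y ^ 2)
    nlinarith [hc]

lemma exists_center [CompleteSpace H] (G : Hadamard H) (hv : ∀ n, dist (v n) c ≤ R) :
    ∃ z : H, d2 v z = r2 v := by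
  have hR0 : 0 ≤ R := le_trans dist_nonneg (hv 0)
  set I := r2 v with hI
  have hmin : ∀ k : ℕ, ∃ x : H, d2 v x < I + 1 / ((k:ℝ) + 1) := by
    intro k
    obtain ⟨a, ha, hlt⟩ := Real.lt_sInf_add_pos (s := Set.range (d2 v)) ⟨d2 v c, c, rfl⟩
      (show (0:ℝ) < 1 / ((k:ℝ) + 1) by positivity)
    obtain ⟨x, rfl⟩ := ha
    exact ⟨x, hlt⟩
  choose xs hxs using hmin
  have key : ∀ j k : ℕ, dist (xs j) (xs k) ^ 2 ≤ 2 / ((j:ℝ) + 1) + 2 / ((k:ℝ) + 1) := by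
    intro j k
    have h1 := hxs j
    have h2 := hxs k
    have hm := d2_strong G hv (xs j) (xs k)
    have hImid : I ≤ d2 v (G.comb (xs j) (xs k) (1/2)) := r2_le_d2 hv _
    have e1 : 1 / ((j:ℝ) + 1) = 2 / ((j:ℝ)+1) / 2 := by ring
    have e2 : 1 / ((k:ℝ) + 1) = 2 / ((k:ℝ)+1) / 2 := by ring
    nlinarith [h1, h2, hm, hImid]
  have hcauchy : CauchySeq xs := by
    rw [Metric.cauchySeq_iff]
    intro ε hε
    obtain ⟨N, hN⟩ := exists_nat_one_div_lt (show (0:ℝ) < ε^2/4 by positivity)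
    refine ⟨N, fun j hj k hk => ?_⟩
    have hj' : 2 / ((j:ℝ) + 1) ≤ 2 / ((N:ℝ) + 1) := by
      apply div_le_div_of_nonneg_left (by norm_num) (by positivity)
      exact_mod_cast by exact_mod_cast Nat.succ_le_succ hj
    have hk' : 2 / ((k:ℝ) + 1) ≤ 2 / ((N:ℝ) + 1) := by
      apply div_le_div_of_nonneg_left (by norm_num) (by positivity)
      exact_mod_cast by exact_mod_cast Nat.succ_le_succ hk
    have h4 := key j k
    have hNN : 2 / ((N:ℝ) + 1) + 2 / ((N:ℝ) + 1) = 4 * (1 / ((N:ℝ)+1)) := by ring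
    have hsq : dist (xs j) (xs k) ^ 2 < ε ^ 2 := by
      calc dist (xs j) (xs k) ^ 2 ≤ 2 / ((j:ℝ) + 1) + 2 / ((k:ℝ) + 1) := h4
        _ ≤ 4 * (1 / ((N:ℝ)+1)) := by linarith
        _ < 4 * (ε^2/4) := by linarith
        _ = ε ^ 2 := by ring
    nlinarith [dist_nonneg (x := xs j) (y := xs k), hε]
  obtain ⟨z, hz⟩ := cauchySeq_tendsto_of_complete hcauchy
  refine ⟨z, le_antisymm ?_ (r2_le_d2 hv z)⟩
  have hD : Tendsto (fun k => dist (xs k) z) atTop (𝓝 0) :=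
    tendsto_iff_dist_tendsto_zero.mp hz
  have hub : ∀ k : ℕ, d2 v z ≤
      (I + 1 / ((k:ℝ)+1)) + 2 * (R + dist c (xs k)) * dist (xs k) z + dist (xs k) z ^ 2 := by
    intro k
    have := d2_lip hv (xs k) z
    have h1 := (hxs k).le
    linarith
  have hdc : Tendsto (fun k => dist c (xs k)) atTop (𝓝 (dist c z)) :=
    tendsto_const_nhds.dist hz
  have h1 : Tendsto (fun k : ℕ => 1 / ((k:ℝ) + 1)) atTop (𝓝 0) :=
    tendsto_one_div_add_atTop_nhds_zero_nat
  have hlim : Tendsto (fun k : ℕ =>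
      (I + 1 / ((k:ℝ)+1)) + 2 * (R + dist c (xs k)) * dist (xs k) z + dist (xs k) z ^ 2)
      atTop (𝓝 I) := by
    have := (((tendsto_const_nhds (x := I)).add h1).add
      ((((tendsto_const_nhds (x := R)).add hdc).const_mul 2).mul hD)).add (hD.pow 2)
    simpa using this
  exact ge_of_tendsto' hlim hub

lemma center_every (G : Hadamard H) (hv : ∀ n, dist (v n) c ≤ R)
    (hreg : ∀ φ : ℕ → ℕ, StrictMono φ → r2 v ≤ r2 (v ∘ φ))
    {z : H} (hz : d2 v z = r2 v) :
    ∀ φ : ℕ → ℕ, StrictMono φ → ∀ x : H, d2 (v ∘ φ) z ≤ d2 (v ∘ φ) x := by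
  intro φ hφ x
  have hR0 : 0 ≤ R := le_trans dist_nonneg (hv 0)
  have hv' : ∀ n, dist ((v ∘ φ) n) c ≤ R := fun n => hv _
  have hr2eq : r2 (v ∘ φ) = r2 v :=
    le_antisymm (r2_subseq_le hv hφ.tendsto_atTop) (hreg φ hφ)
  refine le_trans ?_ (r2_le_d2 hv' x)
  set r := r2 (v ∘ φ) with hr
  have sel : ∀ k : ℕ, ∃ x' : H, d2 (v ∘ φ) x' < r + 1 / ((k:ℝ) + 1) := by
    intro k
    obtain ⟨a, ha, hlt⟩ := Real.lt_sInf_add_pos (s := Set.range (d2 (v ∘ φ)))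
      ⟨d2 (v ∘ φ) c, c, rfl⟩ (show (0:ℝ) < 1 / ((k:ℝ) + 1) by positivity)
    obtain ⟨x', rfl⟩ := ha
    exact ⟨x', hlt⟩
  choose xs hxs using sel
  have hdvz : d2 (v ∘ φ) z ≤ r := by
    have h2 : d2 (v ∘ φ) z ≤ d2 v z := d2_subseq_le hv hφ.tendsto_atTop z
    rw [hz, ← hr2eq] at h2
    exact h2
  have hdzx : ∀ k : ℕ, dist z (xs k) ^ 2 ≤ 2 * (1 / ((k:ℝ) + 1)) := by
    intro k
    have hm := d2_strong G hv' z (xs k)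
    have h1 : r ≤ d2 (v ∘ φ) (G.comb z (xs k) (1/2)) := r2_le_d2 hv' _
    have h2 := (hxs k).le
    nlinarith
  set E : ℕ → ℝ := fun k => Real.sqrt (2 * (1 / ((k:ℝ) + 1))) with hE
  have hdz : ∀ k, dist (xs k) z ≤ E k := by
    intro k
    rw [dist_comm]
    exact Real.le_sqrt_of_sq_le (hdzx k)
  have hub : ∀ k : ℕ, d2 (v ∘ φ) z ≤
      (r + 1 / ((k:ℝ)+1)) + 2 * (R + dist c z + E k) * E k + E k ^ 2 := by
    intro k
    have hl := d2_lip hv' (xs k) z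
    have h1 := (hxs k).le
    have e1 : dist (xs k) z ≤ E k := hdz k
    have e2 : dist c (xs k) ≤ dist c z + E k := by
      have := dist_triangle c z (xs k)
      have e3 : dist z (xs k) ≤ E k := by rw [dist_comm]; exact hdz k
      linarith
    have e0 : (0:ℝ) ≤ E k := Real.sqrt_nonneg _
    have e4 : 2 * (R + dist c (xs k)) * dist (xs k) z ≤ 2 * (R + dist c z + E k) * E k := by
      have hcc : 0 ≤ R + dist c (xs k) := by positivity
      have := mul_le_mul (by linarith : R + dist c (xs k) ≤ R + dist c z + E k) e1
        dist_nonneg (by positivity)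
      linarith
    have e5 : dist (xs k) z ^ 2 ≤ E k ^ 2 := pow_le_pow_left₀ dist_nonneg e1 2
    linarith
  have h1 : Tendsto (fun k : ℕ => 1 / ((k:ℝ) + 1)) atTop (𝓝 0) :=
    tendsto_one_div_add_atTop_nhds_zero_nat
  have hElim : Tendsto E atTop (𝓝 0) := by
    have h2 : Tendsto (fun k : ℕ => 2 * (1 / ((k:ℝ) + 1))) atTop (𝓝 (2 * 0)) :=
      h1.const_mul 2
    have h3 := (Real.continuous_sqrt.tendsto (2 * 0 : ℝ)).comp h2
    have h4 : Tendsto (fun k : ℕ => Real.sqrt (2 * (1 / ((k:ℝ) + 1)))) atTop (𝓝 0) := by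
      simpa [Function.comp_def, one_div, Real.sqrt_zero] using h3
    exact h4
  have hlim : Tendsto (fun k : ℕ =>
      (r + 1 / ((k:ℝ)+1)) + 2 * (R + dist c z + E k) * E k + E k ^ 2) atTop (𝓝 r) := by
    have := (((tendsto_const_nhds (x := r)).add h1).add
      (((tendsto_const_nhds (x := R + dist c z)).add hElim).const_mul 2|>.mul hElim)).add
      (hElim.pow 2)
    simpa using this
  exact ge_of_tendsto' hlim hub

end HW

open HW

/-- Every bounded sequence in a Hadamard space has a weakly convergent
subsequence. -/
theorem exists_weakly_convergent_subsequence
    [CompleteSpace H] (G : Hadamard H) (u : ℕ → H)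
    (hb : Bornology.IsBounded (Set.range u)) :
    ∃ φ : ℕ → ℕ, StrictMono φ ∧ ∃ z : H, WeakConvTo G (u ∘ φ) z := by
  classical
  obtain ⟨R, hR⟩ := (Metric.isBounded_iff_subset_closedBall (u 0)).mp hb
  set c := u 0 with hc
  have hu : ∀ n, dist (u n) c ≤ R := fun n => by
    have := hR (mem_range_self n); rwa [Metric.mem_closedBall] at this
  have hR0 : 0 ≤ R := le_trans dist_nonneg (hu 0)
  -- step choice
  have step : ∀ (k : ℕ) (s : ℕ → ℕ), StrictMono s → ∃ τ : ℕ → ℕ, StrictMono τ ∧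
      r2 (u ∘ s ∘ τ) ≤ rsub (u ∘ s) + 1 / ((k:ℝ) + 1) := by
    intro k s _
    obtain ⟨a, ha, hlt⟩ := Real.lt_sInf_add_pos
      (s := {r | ∃ φ : ℕ → ℕ, StrictMono φ ∧ r2 ((u ∘ s) ∘ φ) = r})
      ⟨r2 ((u ∘ s) ∘ id), id, strictMono_id, rfl⟩
      (show (0:ℝ) < 1 / ((k:ℝ) + 1) by positivity)
    obtain ⟨τ, hτ, rfl⟩ := ha
    exact ⟨τ, hτ, hlt.le⟩
  -- recursive subsequences
  let F : ℕ → {f : ℕ → ℕ // StrictMono f} → {f : ℕ → ℕ // StrictMono f} :=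
    fun k s => ⟨s.1 ∘ Classical.choose (step k s.1 s.2),
      s.2.comp (Classical.choose_spec (step k s.1 s.2)).1⟩
  let σ' : ℕ → {f : ℕ → ℕ // StrictMono f} := fun k => Nat.rec ⟨id, strictMono_id⟩ F k
  let σ : ℕ → ℕ → ℕ := fun k => (σ' k).1
  have hσmono : ∀ k, StrictMono (σ k) := fun k => (σ' k).2
  let τk : ℕ → ℕ → ℕ := fun k => Classical.choose (step k (σ k) (hσmono k))
  have hτk : ∀ k, StrictMono (τk k) ∧
      r2 (u ∘ σ k ∘ τk k) ≤ rsub (u ∘ σ k) + 1 / ((k:ℝ) + 1) :=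
    fun k => Classical.choose_spec (step k (σ k) (hσmono k))
  have hσsucc : ∀ k, σ (k+1) = σ k ∘ τk k := fun k => rfl
  have hbdd : ∀ (w : ℕ → H), (∀ n, dist (w n) c ≤ R) →
      BddBelow {r | ∃ φ : ℕ → ℕ, StrictMono φ ∧ r2 (w ∘ φ) = r} := by
    intro w hw
    refine ⟨0, ?_⟩
    rintro r ⟨φ, hφ, rfl⟩
    exact r2_nonneg (fun n => hw (φ n))
  have huσ : ∀ k n, dist ((u ∘ σ k) n) c ≤ R := fun k n => hu _
  have hspec : ∀ k, r2 (u ∘ σ (k+1)) ≤ rsub (u ∘ σ k) + 1 / ((k:ℝ) + 1) := fun k => (hτk k).2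
  -- diagonal
  let ψ : ℕ → ℕ := fun n => σ n n
  have hψ : StrictMono ψ := by
    apply strictMono_nat_of_lt_succ
    intro n
    have h1 : σ n n < σ n (n+1) := hσmono n (Nat.lt_succ_self n)
    have h2 : σ n (n+1) ≤ σ n (τk n (n+1)) := (hσmono n).monotone ((hτk n).1.le_apply)
    have h3 : ψ (n+1) = σ n (τk n (n+1)) := rfl
    have h0 : ψ n = σ n n := rfl
    omega
  -- factorization
  have factor : ∀ m n, m ≤ n → ∃ e : ℕ → ℕ, StrictMono e ∧ σ n = σ m ∘ e := by
    intro m n h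
    induction n, h using Nat.le_induction with
    | base => exact ⟨id, strictMono_id, rfl⟩
    | succ n hn ih =>
      obtain ⟨e, he, hee⟩ := ih
      exact ⟨e ∘ τk n, he.comp (hτk n).1, by rw [hσsucc n, hee]; rfl⟩
  choose E hE1 hE2 using factor
  -- key1
  have key1 : ∀ (k : ℕ) (φ : ℕ → ℕ), StrictMono φ → rsub (u ∘ σ k) ≤ r2 (u ∘ ψ ∘ φ) := by
    intro k φ hφ
    have hge : ∀ j : ℕ, k ≤ φ (j + k) := fun j => le_trans (Nat.le_add_left k j) hφ.le_apply
    set γ : ℕ → ℕ := fun j => E k (φ (j + k)) (hge j) (φ (j + k)) with hγdef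
    have hcomm : ∀ j, ψ (φ (j + k)) = σ k (γ j) := by
      intro j
      have h1 := hE2 k (φ (j + k)) (hge j)
      calc ψ (φ (j + k)) = σ (φ (j + k)) (φ (j + k)) := rfl
        _ = σ k (γ j) := by rw [h1]; rfl
    have hγ : StrictMono γ := by
      intro i j hij
      have h1 : σ k (γ i) < σ k (γ j) := by
        rw [← hcomm i, ← hcomm j]
        exact hψ (hφ (Nat.add_lt_add_right hij k))
      exact (hσmono k).lt_iff_lt.mp h1
    have hshift : r2 (u ∘ ψ ∘ φ) = r2 ((u ∘ σ k) ∘ γ) := by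
      have h1 : (fun j => (u ∘ ψ ∘ φ) (j + k)) = (u ∘ σ k) ∘ γ := by
        funext j
        exact congrArg u (hcomm j)
      rw [← r2_shift (v := u ∘ ψ ∘ φ) k, h1]
    rw [hshift]
    exact csInf_le (hbdd _ (huσ k)) ⟨γ, hγ, rfl⟩
  -- key2
  have key2 : ∀ k : ℕ, r2 (u ∘ ψ) ≤ rsub (u ∘ σ k) + 1 / ((k:ℝ) + 1) := by
    intro k
    have hge : ∀ j : ℕ, k + 1 ≤ j + (k + 1) := fun j => Nat.le_add_left _ _
    set γ : ℕ → ℕ := fun j => E (k+1) (j + (k+1)) (hge j) (j + (k+1)) with hγdef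
    have hcomm : ∀ j, ψ (j + (k+1)) = σ (k+1) (γ j) := by
      intro j
      have h1 := hE2 (k+1) (j + (k+1)) (hge j)
      calc ψ (j + (k+1)) = σ (j + (k+1)) (j + (k+1)) := rfl
        _ = σ (k+1) (γ j) := by rw [h1]; rfl
    have hγ : StrictMono γ := by
      intro i j hij
      have h1 : σ (k+1) (γ i) < σ (k+1) (γ j) := by
        rw [← hcomm i, ← hcomm j]
        exact hψ (Nat.add_lt_add_right hij (k+1))
      exact (hσmono (k+1)).lt_iff_lt.mp h1
    have e1 : r2 (u ∘ ψ) = r2 ((u ∘ σ (k+1)) ∘ γ) := by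
      have h1 : (fun j => (u ∘ ψ) (j + (k+1))) = (u ∘ σ (k+1)) ∘ γ := by
        funext j
        exact congrArg u (hcomm j)
      rw [← r2_shift (v := u ∘ ψ) (k+1), h1]
    have e2 : r2 ((u ∘ σ (k+1)) ∘ γ) ≤ r2 (u ∘ σ (k+1)) :=
      r2_subseq_le (huσ (k+1)) hγ.tendsto_atTop
    calc r2 (u ∘ ψ) = r2 ((u ∘ σ (k+1)) ∘ γ) := e1
      _ ≤ r2 (u ∘ σ (k+1)) := e2
      _ ≤ rsub (u ∘ σ k) + 1 / ((k:ℝ) + 1) := hspec k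
  -- regularity
  have regular : ∀ φ : ℕ → ℕ, StrictMono φ → r2 (u ∘ ψ) ≤ r2 ((u ∘ ψ) ∘ φ) := by
    intro φ hφ
    refine le_of_forall_pos_le_add fun ε hε => ?_
    obtain ⟨k, hk⟩ := exists_nat_one_div_lt hε
    have h1 := key2 k
    have h2 := key1 k φ hφ
    have h3 : r2 (u ∘ ψ ∘ φ) = r2 ((u ∘ ψ) ∘ φ) := rfl
    rw [h3] at h2
    linarith
  -- asymptotic center
  set w : ℕ → H := u ∘ ψ with hwdef
  have hw : ∀ n, dist (w n) c ≤ R := fun n => hu _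
  obtain ⟨z, hzc⟩ := exists_center G hw
  have hcenter : ∀ φ : ℕ → ℕ, StrictMono φ → ∀ x : H, d2 (w ∘ φ) z ≤ d2 (w ∘ φ) x :=
    center_every G hw regular hzc
  refine ⟨ψ, hψ, z, ?_, ?_⟩
  · exact hb.subset (Set.range_comp_subset_range ψ u)
  · intro y p hp
    have hScomp : IsCompact ((fun t => G.comb z y t) '' Set.Icc (0:ℝ) 1) := seg_compact G z y
    set S := (fun t => G.comb z y t) '' Set.Icc (0:ℝ) 1 with hSdef
    have hSz : ∀ x' ∈ S, dist z x' ≤ dist z y := by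
      rintro x' ⟨t, ht, rfl⟩
      rw [G.dist_comb_left z y t ht]
      nlinarith [ht.1, ht.2, dist_nonneg (x := z) (y := y)]
    set K : ℝ := R + dist c z + dist z y with hKdef
    have hK0 : 0 ≤ K := by positivity
    have hKb : ∀ (n : ℕ), ∀ x' ∈ S, dist (w n) x' ≤ K := by
      intro n x' hx'
      calc dist (w n) x' ≤ dist (w n) c + dist c z + dist z x' := by
            have := dist_triangle4 (w n) c z x'
            linarith
        _ ≤ K := by have := hSz x' hx'; have := hw n; rw [hKdef]; linarith
    refine tendsto_of_subseq_tendsto fun ns hns => ?_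
    have hmem : ∀ n, (p ∘ ns) n ∈ S := fun n => (hp (ns n)).1
    obtain ⟨q, hqS, φ₂, hφ₂, hq2⟩ := hScomp.tendsto_subseq hmem
    obtain ⟨φ₃, hφ₃, hmono3⟩ :=
      strictMono_subseq_of_tendsto_atTop (hns.comp hφ₂.tendsto_atTop)
    set σσ : ℕ → ℕ := (ns ∘ φ₂) ∘ φ₃ with hσσdef
    have hσσ : StrictMono σσ := hmono3
    have hpq : Tendsto (fun n => p (σσ n)) atTop (𝓝 q) := hq2.comp hφ₃.tendsto_atTop
    -- show z = q
    obtain ⟨s, hsIcc, hsq⟩ := hqS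
    have hs2 : s / 2 ∈ Set.Icc (0:ℝ) 1 := ⟨by linarith [hsIcc.1], by linarith [hsIcc.2]⟩
    set m : H := G.comb z y (s/2) with hmdef
    have hmS : m ∈ S := ⟨s/2, hs2, rfl⟩
    have hmid : G.comb z q (1/2) = m := by
      rw [← hsq]
      exact comb_half G hsIcc
    set A : ℕ → ℝ := fun n => dist (w (σσ n)) q ^ 2 with hA
    set B : ℕ → ℝ := fun n => dist (w (σσ n)) (p (σσ n)) ^ 2 with hB
    set C : ℕ → ℝ := fun n => dist (w (σσ n)) z ^ 2 with hC
    set Dm : ℕ → ℝ := fun n => dist (w (σσ n)) m ^ 2 with hDm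
    have hqS' : q ∈ S := ⟨s, hsIcc, hsq⟩
    have hA_bound : ∀ n, A n ≤ K ^ 2 := fun n =>
      pow_le_pow_left₀ dist_nonneg (hKb (σσ n) q hqS') 2
    have hB_bound : ∀ n, B n ≤ K ^ 2 := fun n =>
      pow_le_pow_left₀ dist_nonneg (hKb (σσ n) (p (σσ n)) (hp (σσ n)).1) 2
    have hC_bound : ∀ n, C n ≤ (R + dist c z) ^ 2 := fun n =>
      dist_sq_le (v := w ∘ σσ) (fun n => hw _) z n
    have hDm_bound : ∀ n, Dm n ≤ K ^ 2 := fun n =>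
      pow_le_pow_left₀ dist_nonneg (hKb (σσ n) m hmS) 2
    set e : ℕ → ℝ := fun n => dist (p (σσ n)) q with he
    have helim : Tendsto e atTop (𝓝 0) := tendsto_iff_dist_tendsto_zero.mp hpq
    set δ : ℕ → ℝ := fun n => 2 * K * e n + e n ^ 2 with hδ
    have hδlim : Tendsto δ atTop (𝓝 0) := by
      have := ((helim.const_mul (2 * K)).add (helim.pow 2))
      simpa using this
    have hδ0 : ∀ n, 0 ≤ δ n := fun n => by
      have : 0 ≤ e n := dist_nonneg
      positivity
    have hLδ : limsup δ atTop = 0 := hδlim.limsup_eq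
    have he_bound : ∀ n, e n ≤ 2 * dist z y := by
      intro n
      have h1 : dist (p (σσ n)) q ≤ dist (p (σσ n)) z + dist z q := dist_triangle _ _ _
      have h2 : dist z (p (σσ n)) ≤ dist z y := hSz _ (hp (σσ n)).1
      have h3 : dist z q ≤ dist z y := hSz _ hqS'
      rw [dist_comm (p (σσ n)) z] at h1
      simp only [he]
      linarith
    have hδ_bound : ∀ n, δ n ≤ 2 * K * (2 * dist z y) + (2 * dist z y) ^ 2 := by
      intro n
      have h1 := he_bound n
      have h2 : (0:ℝ) ≤ e n := dist_nonneg
      have h3 : e n ^ 2 ≤ (2 * dist z y) ^ 2 := pow_le_pow_left₀ h2 h1 2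
      have h4 : 2 * K * e n ≤ 2 * K * (2 * dist z y) :=
        mul_le_mul_of_nonneg_left h1 (by positivity)
      simp only [hδ]
      linarith
    -- limsup chain
    have hC_le_A : limsup C atTop ≤ limsup A atTop := hcenter σσ hσσ q
    have hB_le_Dm : limsup B atTop ≤ limsup Dm atTop := by
      refine limsup_mono2 (fun n => ?_) (fun n => sq_nonneg _) hDm_bound
      exact pow_le_pow_left₀ dist_nonneg ((hp (σσ n)).2 m hmS) 2
    have hA_le_B : limsup A atTop ≤ limsup B atTop := by
      have h := limsup_combo (f := A) (a := B) (b := δ) (s := 1) (t := 1) (c := 0)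
        (Ma := K ^ 2) (Mb := 2 * K * (2 * dist z y) + (2 * dist z y) ^ 2)
        one_pos.le one_pos.le (fun n => sq_nonneg _) hB_bound hδ_bound (fun n => ?_)
      · rw [hLδ] at h
        linarith
      · have h1 : dist (w (σσ n)) q ≤ dist (w (σσ n)) (p (σσ n)) + e n := by
          simp only [he]
          exact dist_triangle _ _ _
        have h2 : dist (w (σσ n)) (p (σσ n)) ≤ K := hKb (σσ n) (p (σσ n)) (hp (σσ n)).1
        have h3 : (0:ℝ) ≤ e n := dist_nonneg
        show dist (w (σσ n)) q ^ 2 ≤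
          1 * dist (w (σσ n)) (p (σσ n)) ^ 2 + 1 * (2 * K * e n + e n ^ 2) + 0
        nlinarith [dist_nonneg (x := w (σσ n)) (y := q),
          dist_nonneg (x := w (σσ n)) (y := p (σσ n))]
    have hDm_le : limsup Dm atTop ≤
        1/2 * limsup C atTop + 1/2 * limsup A atTop - 1/4 * dist z q ^ 2 := by
      have h := limsup_combo (f := Dm) (a := C) (b := A) (s := 1/2) (t := 1/2)
        (c := -(1/4 * dist z q ^ 2))
        (Ma := (R + dist c z) ^ 2) (Mb := K ^ 2)
        (by norm_num) (by norm_num) (fun n => sq_nonneg _) hC_bound hA_bound (fun n => ?_)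
      · linarith
      · have hcc := G.cat0 z q (w (σσ n)) (1/2) ⟨by norm_num, by norm_num⟩
        rw [hmid] at hcc
        show dist (w (σσ n)) m ^ 2 ≤
          1/2 * dist (w (σσ n)) z ^ 2 + 1/2 * dist (w (σσ n)) q ^ 2 + -(1/4 * dist z q ^ 2)
        nlinarith [hcc]
    have hzq : dist z q = 0 := by
      have h1 : limsup A atTop ≤ limsup A atTop - 1/4 * dist z q ^ 2 := by
        calc limsup A atTop ≤ limsup B atTop := hA_le_B
          _ ≤ limsup Dm atTop := hB_le_Dm
          _ ≤ 1/2 * limsup C atTop + 1/2 * limsup A atTop - 1/4 * dist z q ^ 2 := hDm_le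
          _ ≤ limsup A atTop - 1/4 * dist z q ^ 2 := by linarith
      nlinarith [dist_nonneg (x := z) (y := q)]
    have hzq' : z = q := dist_eq_zero.mp hzq
    refine ⟨φ₂ ∘ φ₃, ?_⟩
    rw [hzq']
    exact hpq
end

section
/- Let H be a Hadamard space and f : H → (−∞,∞] a proper convex lower semicontinuous function. Then f is weakly lower semicontinuous: if a bounded sequence (x_n) converges weakly to x ∈ dom f, then liminf_n f(x_n) ≥ f(x). -/
open Metric Filter Set

variable {H : Type*} [MetricSpace H]

lemma Hadamard.dist_comb_comb (G : Hadamard H) (x y : H) {s t : ℝ}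
    (hs : s ∈ Set.Icc (0:ℝ) 1) (ht : t ∈ Set.Icc (0:ℝ) 1) :
    dist (G.comb x y s) (G.comb x y t) ≤ |s - t| * dist x y := by
  have h := G.cat0 x y (G.comb x y s) t ht
  have h1 := G.dist_comb_left x y s hs
  have h2 := G.dist_comb_right x y s hs
  have hd : dist (G.comb x y s) x = s * dist x y := by rw [dist_comm]; exact h1
  rw [hd, h2] at h
  have key : dist (G.comb x y s) (G.comb x y t) ^ 2 ≤ ((s - t) * dist x y) ^ 2 :=
    le_of_le_of_eq h (by ring)
  have habs : ((s - t) * dist x y) ^ 2 = (|s - t| * dist x y) ^ 2 := by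
    rw [mul_pow, mul_pow, sq_abs]
  rw [habs] at key
  nlinarith [dist_nonneg (x := G.comb x y s) (y := G.comb x y t),
    mul_nonneg (abs_nonneg (s - t)) (dist_nonneg (x := x) (y := y))]

lemma key_ineq (G : Hadamard H) {C : Set H} (hC : GConvexSet G C)
    {c v q : H} (hc : c ∈ C) (hv : v ∈ C) {m : ℝ} (hm0 : 0 ≤ m)
    (hm : ∀ w ∈ C, m ≤ dist q w) {s : ℝ} (hs : s ∈ Set.Icc (0:ℝ) 1) :
    m ^ 2 ≤ (1 - s) * dist q c ^ 2 + s * dist q v ^ 2 - s * (1 - s) * dist c v ^ 2 := by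
  have hw := hC c hc v hv s hs
  have h1 := hm _ hw
  have h2 := G.cat0 c v q s hs
  nlinarith [h1, h2, hm0]

set_option maxHeartbeats 1000000 in
/-- A proper convex lsc function on a Hadamard space is weakly lower
semicontinuous. -/
theorem weak_lsc_of_convex_lsc
    [CompleteSpace H] (G : Hadamard H) (f : H → EReal)
    (hbot : ∀ x, f x ≠ ⊥) (hproper : ∃ x, f x ≠ ⊤)
    (hconv : GConvexFn G f) (hlsc : LowerSemicontinuous f)
    (u : ℕ → H) (x : H) (hx : f x ≠ ⊤)
    (hw : WeakConvTo G u x) :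
    f x ≤ Filter.liminf (fun n => f (u n)) Filter.atTop := by
  by_contra hcon
  push_neg at hcon
  obtain ⟨a, ha1, ha2⟩ := EReal.exists_between_coe_real hcon
  set C : Set H := f ⁻¹' Set.Iic (a : EReal) with hCdef
  have hCclosed : IsClosed C := hlsc.isClosed_preimage (a : EReal)
  have hCconv : GConvexSet G C := by
    intro w hwC v hvC t ht
    have h0 : (0:ℝ) ≤ 1 - t := by linarith [ht.2]
    have h1 : ((1 - t : ℝ) : EReal) * f w ≤ ((1 - t : ℝ) : EReal) * (a : EReal) :=
      mul_le_mul_of_nonneg_left hwC (by exact_mod_cast h0)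
    have h2 : ((t : ℝ) : EReal) * f v ≤ ((t : ℝ) : EReal) * (a : EReal) :=
      mul_le_mul_of_nonneg_left hvC (by exact_mod_cast ht.1)
    have : f (G.comb w v t) ≤ ((1 - t : ℝ) : EReal) * (a : EReal) + ((t : ℝ) : EReal) * (a : EReal) :=
      le_trans (hconv w v t ht) (add_le_add h1 h2)
    have heq : ((1 - t : ℝ) : EReal) * (a : EReal) + ((t : ℝ) : EReal) * (a : EReal) = (a : EReal) := by
      rw [← EReal.coe_mul, ← EReal.coe_mul, ← EReal.coe_add]
      norm_cast
      ring
    rw [heq] at this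
    exact this
  have hfreq : ∃ᶠ n in atTop, u n ∈ C := by
    by_contra hf
    rw [not_frequently] at hf
    have : (a : EReal) ≤ liminf (fun n => f (u n)) atTop :=
      le_liminf_of_le (by isBoundedDefault) (hf.mono fun n hn => le_of_lt (not_le.1 hn))
    exact absurd this (not_le.2 ha1)
  have hxC : x ∉ C := fun h => absurd ha2 (not_lt.2 h)
  have hne : C.Nonempty := by obtain ⟨n, hn⟩ := hfreq.exists; exact ⟨u n, hn⟩
  obtain ⟨r, hrdef⟩ : ∃ r, r = infDist x C := ⟨_, rfl⟩
  have hinf : ∀ w ∈ C, r ≤ dist x w := fun w hw' => hrdef ▸ infDist_le_dist_of_mem hw'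
  have hr : 0 < r := hrdef ▸ (hCclosed.notMem_iff_infDist_pos hne).1 hxC
  obtain ⟨φ, hφ, hφC⟩ := extraction_of_frequently_atTop hfreq
  obtain ⟨M, hM⟩ := hw.1.subset_closedBall x
  have hMn : ∀ n, dist (u n) x ≤ M := fun n => hM (mem_range_self n)
  have hM0 : 0 ≤ M := le_trans dist_nonneg (hMn 0)
  obtain ⟨B, hBdef⟩ : ∃ B : ℝ, B = r + 1 + M := ⟨_, rfl⟩
  have hB0 : 0 < B := by rw [hBdef]; positivity
  obtain ⟨K, hKdef⟩ : ∃ K : ℝ, K = B ^ 2 + 2 * B + 1 := ⟨_, rfl⟩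
  have hK0 : 0 < K := by rw [hKdef]; positivity
  obtain ⟨s, hsdef⟩ : ∃ s : ℝ, s = min 1 (r ^ 2 / (8 * K)) := ⟨_, rfl⟩
  have hs0 : 0 < s := hsdef ▸ lt_min one_pos (by positivity)
  have hs1 : s ≤ 1 := hsdef ▸ min_le_left _ _
  have hsK : s * K ≤ r ^ 2 / 8 := by
    have h' : s ≤ r ^ 2 / (8 * K) := hsdef ▸ min_le_right _ _
    calc s * K ≤ (r ^ 2 / (8 * K)) * K := by nlinarith
    _ = r ^ 2 / 8 := by field_simp
  have hε0 : 0 < s ^ 2 := by positivity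
  have hε1 : s ^ 2 ≤ 1 := by nlinarith
  obtain ⟨c, hcC, hcd⟩ := (infDist_lt_iff hne).1
    (by rw [← hrdef]; linarith : infDist x C < r + s ^ 2)
  have hrc : r ≤ dist x c := hinf c hcC
  have hcB : dist x c ≤ B := by linarith [hε1, hM0]
  -- the geodesic segment from x to c
  set S : Set H := (fun t => G.comb x c t) '' Set.Icc (0:ℝ) 1 with hSdef
  have hlip : LipschitzOnWith (Real.toNNReal (dist x c)) (fun t => G.comb x c t) (Set.Icc 0 1) := by
    apply LipschitzOnWith.of_dist_le_mul
    intro t1 h1 t2 h2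
    have := G.dist_comb_comb x c h1 h2
    rw [Real.coe_toNNReal _ dist_nonneg, Real.dist_eq]
    calc dist (G.comb x c t1) (G.comb x c t2) ≤ |t1 - t2| * dist x c := this
    _ = dist x c * |t1 - t2| := mul_comm _ _
  have hScompact : IsCompact S := isCompact_Icc.image_of_continuousOn hlip.continuousOn
  have hSne : S.Nonempty := ⟨_, ⟨0, ⟨le_refl _, zero_le_one⟩, rfl⟩⟩
  have hc1 : G.comb x c 1 = c := by
    have := G.dist_comb_right x c 1 ⟨zero_le_one, le_refl _⟩
    rw [sub_self, zero_mul] at this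
    exact dist_eq_zero.1 this
  have hcS : c ∈ S := ⟨1, ⟨zero_le_one, le_refl _⟩, hc1⟩
  have hexists : ∀ n, ∃ pt, pt ∈ S ∧ ∀ q ∈ S, dist (u n) pt ≤ dist (u n) q := by
    intro n
    obtain ⟨pt, hpt, hd⟩ := hScompact.exists_infDist_eq_dist hSne (u n)
    exact ⟨pt, hpt, fun q hq => hd ▸ infDist_le_dist_of_mem hq⟩
  choose p hpS hpmin using hexists
  have htend : Tendsto p atTop (nhds x) := hw.2 c p (fun n => ⟨hpS n, hpmin n⟩)
  obtain ⟨N, hN⟩ := (Metric.tendsto_atTop.1 htend) (r / 2) (by positivity)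
  -- work at index k = φ N
  obtain ⟨k, hkdef⟩ : ∃ k, k = φ N := ⟨_, rfl⟩
  have hvC : u k ∈ C := hkdef ▸ hφC N
  obtain ⟨t, ht, hqt⟩ := hpS k
  obtain ⟨q, hqdef⟩ : ∃ q, q = p k := ⟨_, rfl⟩
  rw [← hqdef] at hqt
  have hxq : dist x q = t * dist x c := by rw [← hqt]; exact G.dist_comb_left x c t ht
  have hqc : dist q c = (1 - t) * dist x c := by rw [← hqt]; exact G.dist_comb_right x c t ht
  have hadd : dist x q + dist q c = dist x c := by rw [hxq, hqc]; ring
  obtain ⟨ρ, hρdef⟩ : ∃ ρ, ρ = dist q c := ⟨_, rfl⟩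
  have hρ0 : 0 ≤ ρ := by rw [hρdef]; exact dist_nonneg
  have hρB : ρ ≤ B := by
    have h' : ρ ≤ dist x c := by
      rw [hρdef, hqc]
      nlinarith [dist_nonneg (x := x) (y := c), ht.1, ht.2]
    linarith
  obtain ⟨m, hmdef⟩ : ∃ m : ℝ, m = max (ρ - s ^ 2) 0 := ⟨_, rfl⟩
  have hm0 : 0 ≤ m := by rw [hmdef]; exact le_max_right _ _
  have hmρ : ρ ≤ m + s ^ 2 := by
    have h' : ρ - s ^ 2 ≤ m := by rw [hmdef]; exact le_max_left _ _
    linarith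
  have hmle : m ≤ ρ := by rw [hmdef]; exact max_le (by linarith) hρ0
  have hm : ∀ w ∈ C, m ≤ dist q w := by
    intro w hwC
    rw [hmdef]
    refine max_le ?_ dist_nonneg
    have h1 : r ≤ dist x w := hinf w hwC
    have h2 : dist x w ≤ dist x q + dist q w := dist_triangle x q w
    have h3 : ρ = dist x c - dist x q := by rw [hρdef]; linarith [hadd]
    linarith
  have hkey := key_ineq G hCconv hcC hvC hm0 hm ⟨le_of_lt hs0, hs1⟩
  rw [← hρdef] at hkey
  have hqv : dist q (u k) ≤ dist c (u k) := by
    have h' := hpmin k c hcS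
    rw [← hqdef] at h'
    rw [dist_comm (u k) q, dist_comm (u k) c] at h'
    exact h'
  have hcv : dist c (u k) ≤ B := by
    have h1 : dist c (u k) ≤ dist c x + dist x (u k) := dist_triangle c x (u k)
    have h2 : dist c x = dist x c := dist_comm c x
    have h3 : dist x (u k) = dist (u k) x := dist_comm x (u k)
    have := hMn k
    linarith
  clear hconv hlsc hbot hproper hcon ha1 ha2 hw hM hfreq htend hlip hScompact hSne hpmin hpS hφC hCclosed hCconv hMn hxC hinf
  -- extract ρ² ≤ s * K
  have hρbound : ρ ^ 2 ≤ s * K := by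
    have e1 : dist q (u k) ^ 2 ≤ dist c (u k) ^ 2 := by
      nlinarith [hqv, dist_nonneg (x := q) (y := u k)]
    have e2 : dist c (u k) ^ 2 ≤ B ^ 2 := by
      nlinarith [hcv, dist_nonneg (x := c) (y := u k)]
    have t1 : s * dist q (u k) ^ 2 ≤ s * dist c (u k) ^ 2 :=
      mul_le_mul_of_nonneg_left e1 hs0.le
    have t2 : s ^ 2 * dist c (u k) ^ 2 ≤ s ^ 2 * B ^ 2 :=
      mul_le_mul_of_nonneg_left e2 (sq_nonneg s)
    have e3 : m ^ 2 ≤ (1 - s) * ρ ^ 2 + s ^ 2 * B ^ 2 := by nlinarith [hkey, t1, t2]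
    have e4a : ρ ^ 2 ≤ (m + s ^ 2) ^ 2 := pow_le_pow_left₀ hρ0 hmρ 2
    have e4b : m * s ^ 2 ≤ B * s ^ 2 :=
      mul_le_mul_of_nonneg_right (hmle.trans hρB) (sq_nonneg s)
    have e4 : ρ ^ 2 ≤ m ^ 2 + 2 * B * s ^ 2 + s ^ 4 := by nlinarith [e4a, e4b]
    have e7 : s * ρ ^ 2 ≤ s * (s * (B ^ 2 + 2 * B + s ^ 2)) := by nlinarith [e3, e4]
    have e8 : ρ ^ 2 ≤ s * (B ^ 2 + 2 * B + s ^ 2) := le_of_mul_le_mul_left e7 hs0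
    have e9 : s * s ^ 2 ≤ s * 1 := mul_le_mul_of_nonneg_left hε1 hs0.le
    nlinarith [e8, e9]
  have hρhalf : ρ < r / 2 := by nlinarith [hsK, hρ0, hr, hρbound]
  have hfar := hN k (by rw [hkdef]; exact hφ.le_apply)
  have htri : dist x c ≤ dist x q + ρ := by rw [hρdef]; linarith [hadd]
  have hxq2 : dist x q < r / 2 := by rw [hqdef, dist_comm]; exact hfar
  linarith
end

section
/- Let H be a Hadamard space, f : H → (−∞,∞] proper convex lsc with resolvent J_λ, and (S_t)_{t≥0} the gradient flow semigroup defined by S_t(x) = lim_{n→∞} (J_{t/n})^{(n)}(x) for x ∈ cl(dom f). Then for every x ∈ cl(dom f), t > 0, and v ∈ dom f: (1/(2t)) d(S_t x, v)² − (1/(2t)) d(x, v)² + f(S_t x) ≤ f(v). -/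
open Metric Filter Set

variable {H : Type*} [MetricSpace H]

private lemma evi_div_helper {c u w p1 p2 : ℝ} (hc : 0 < c) (h : c * u + p1 ≤ c * w + p2) :
    u + p1 / c ≤ w + p2 / c := by
  rw [show u + p1 / c = (c * u + p1) / c by field_simp,
      show w + p2 / c = (c * w + p2) / c by field_simp]
  gcongr

private lemma evi_div_helper' {c u w p1 p2 : ℝ} (hc : 0 < c) (h : u + p1 / c ≤ w + p2 / c) :
    c * u + p1 ≤ c * w + p2 := by
  rw [show u + p1 / c = (c * u + p1) / c by field_simp,
      show w + p2 / c = (c * w + p2) / c by field_simp] at h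
  exact (div_le_div_iff_of_pos_right hc).mp h

/-- Key resolvent inequality: if `p = J_lam y` then for any `z` in the domain,
`f p + d(p,z)²/(2λ) ≤ f z + d(y,z)²/(2λ)` (real form), and `f p` is finite. -/
private lemma key_resolvent (G : Hadamard H) (f : H → EReal)
    (hbot : ∀ x, f x ≠ ⊥) (hconv : GConvexFn G f)
    {lam : ℝ} (hlam : 0 < lam) (y p z : H)
    (hres : IsResolvent f lam y p) (hz : f z ≠ ⊤) :
    f p ≠ ⊤ ∧
      (f p).toReal + dist p z ^ 2 / (2 * lam) ≤ (f z).toReal + dist y z ^ 2 / (2 * lam) := by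
  have hz' : f z = ((f z).toReal : EReal) := (EReal.coe_toReal hz (hbot z)).symm
  set b : ℝ := (f z).toReal with hb
  have htop : f p ≠ ⊤ := by
    intro h
    have := hres z
    rw [h, hz'] at this
    simp [← EReal.coe_add] at this
  have hp' : f p = ((f p).toReal : EReal) := (EReal.coe_toReal htop (hbot p)).symm
  set a : ℝ := (f p).toReal with ha
  refine ⟨htop, ?_⟩
  have h2 : (0 : ℝ) < 2 * lam := by linarith
  apply evi_div_helper h2
  -- multiplied form
  have hstep : ∀ s : ℝ, 0 < s → s ≤ 1 →
      2 * lam * a + dist p z ^ 2 ≤ 2 * lam * b + dist y z ^ 2 + s * dist p z ^ 2 := by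
    intro s hs0 hs1
    have hmem : s ∈ Set.Icc (0:ℝ) 1 := ⟨hs0.le, hs1⟩
    set m := G.comb p z s with hm
    have hconv' : f m ≤ (((1 - s) * a + s * b : ℝ) : EReal) := by
      have := hconv p z s hmem
      rw [hp', hz', ← EReal.coe_mul, ← EReal.coe_mul, ← EReal.coe_add] at this
      exact this
    have hres' := hres m
    rw [hp'] at hres'
    have hchain : ((a + dist y p ^ 2 / (2 * lam) : ℝ) : EReal)
        ≤ (((1 - s) * a + s * b + dist y m ^ 2 / (2 * lam) : ℝ) : EReal) := by
      push_cast
      calc (a : EReal) + ((dist y p ^ 2 / (2 * lam) : ℝ) : EReal)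
          ≤ f m + ((dist y m ^ 2 / (2 * lam) : ℝ) : EReal) := hres'
        _ ≤ (((1 - s) * a + s * b : ℝ) : EReal) + ((dist y m ^ 2 / (2 * lam) : ℝ) : EReal) :=
            add_le_add_left hconv' _
        _ = _ := by push_cast; ring_nf
    have hreal : a + dist y p ^ 2 / (2 * lam)
        ≤ (1 - s) * a + s * b + dist y m ^ 2 / (2 * lam) := EReal.coe_le_coe_iff.mp hchain
    have hreal' : 2 * lam * a + dist y p ^ 2
        ≤ 2 * lam * ((1 - s) * a + s * b) + dist y m ^ 2 := evi_div_helper' h2 hreal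
    have hcat := G.cat0 p z y s hmem
    rw [← hm] at hcat
    nlinarith [sq_nonneg (dist y p), sq_nonneg (dist p z), mul_pos hs0 hlam,
      mul_nonneg hs0.le (sq_nonneg (dist y p)), mul_nonneg hs0.le (sq_nonneg (dist p z))]
  apply le_of_forall_pos_le_add
  intro ε hε
  set c := dist p z ^ 2 with hc
  have hc0 : 0 ≤ c := sq_nonneg _
  set s : ℝ := min 1 (ε / (c + 1)) with hs
  have hs0 : 0 < s := lt_min one_pos (div_pos hε (by linarith))
  have hs1 : s ≤ 1 := min_le_left _ _
  have hsc : s * c ≤ ε := by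
    have h1 : s ≤ ε / (c + 1) := min_le_right _ _
    have h2 : s * c ≤ (ε / (c + 1)) * c := mul_le_mul_of_nonneg_right h1 hc0
    have h3 : (ε / (c + 1)) * c ≤ ε := by
      rw [div_mul_eq_mul_div, div_le_iff₀ (by linarith : (0:ℝ) < c + 1)]
      nlinarith
    linarith
  have := hstep s hs0 hs1
  linarith

/-- The evolution variational inequality (EVI) for the gradient flow semigroup
`S_t x = lim_n (J_{t/n})^(n) x`. -/
theorem semigroup_evolution_variational_inequality
    [CompleteSpace H] (G : Hadamard H) (f : H → EReal)
    (hbot : ∀ x, f x ≠ ⊥) (hproper : ∃ x, f x ≠ ⊤)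
    (hconv : GConvexFn G f) (hlsc : LowerSemicontinuous f)
    (J : ℝ → H → H)
    (hJ : ∀ lam > (0:ℝ), ∀ y : H, IsResolvent f lam y (J lam y))
    (hJ0 : ∀ y : H, J 0 y = y)
    (S : ℝ → H → H)
    (hS : ∀ t ≥ (0:ℝ), ∀ x ∈ closure {y : H | f y ≠ ⊤},
      Tendsto (fun n : ℕ => (J (t / (n : ℝ)))^[n] x) atTop (nhds (S t x)))
    (x : H) (hx : x ∈ closure {y : H | f y ≠ ⊤})
    (t : ℝ) (ht : 0 < t) (v : H) (hv : f v ≠ ⊤) :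
    ((dist (S t x) v ^ 2 / (2 * t) - dist x v ^ 2 / (2 * t) : ℝ) : EReal)
      + f (S t x) ≤ f v := by
  have hv' : f v = ((f v).toReal : EReal) := (EReal.coe_toReal hv (hbot v)).symm
  set b : ℝ := (f v).toReal with hb
  set F : ℕ → H := fun n => (J (t / (n : ℝ)))^[n] x with hF
  -- Main per-n estimate
  have main : ∀ n : ℕ, 1 ≤ n → f (F n) ≠ ⊤ ∧
      (f (F n)).toReal + dist (F n) v ^ 2 / (2 * t) ≤ b + dist x v ^ 2 / (2 * t) := by
    intro n hn
    have hn' : (0 : ℝ) < (n : ℝ) := by exact_mod_cast hn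
    set lam : ℝ := t / (n : ℝ) with hlamdef
    have hlam : 0 < lam := div_pos ht hn'
    set seq : ℕ → H := fun k => (J lam)^[k] x with hseq
    have hres : ∀ k, IsResolvent f lam (seq k) (seq (k + 1)) := by
      intro k
      have : seq (k + 1) = J lam (seq k) := Function.iterate_succ_apply' _ _ _
      rw [this]
      exact hJ lam hlam (seq k)
    have hkey : ∀ k, f (seq (k + 1)) ≠ ⊤ ∧
        (f (seq (k + 1))).toReal + dist (seq (k + 1)) v ^ 2 / (2 * lam)
          ≤ b + dist (seq k) v ^ 2 / (2 * lam) :=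
      fun k => key_resolvent G f hbot hconv hlam (seq k) (seq (k + 1)) v (hres k) hv
    have hmono : ∀ k, (f (seq (k + 2))).toReal ≤ (f (seq (k + 1))).toReal := by
      intro k
      have h1 := hres (k + 1) (seq (k + 1))
      rw [dist_self] at h1
      have h2 : f (seq (k + 2)) ≤ f (seq (k + 1)) := by
        calc f (seq (k + 2))
            ≤ f (seq (k + 2)) + ((dist (seq (k+1)) (seq (k+2)) ^ 2 / (2 * lam) : ℝ) : EReal) :=
              le_add_of_nonneg_right (by
                exact_mod_cast div_nonneg (sq_nonneg _) (by linarith : (0:ℝ) ≤ 2 * lam))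
          _ ≤ f (seq (k + 1)) + (((0:ℝ) ^ 2 / (2 * lam) : ℝ) : EReal) := h1
          _ = f (seq (k + 1)) := by norm_num
      exact EReal.toReal_le_toReal h2 (hbot _) (hkey k).1
    -- induction
    have ind : ∀ k : ℕ, 1 ≤ k →
        (k : ℝ) * (f (seq k)).toReal + dist (seq k) v ^ 2 / (2 * lam)
          ≤ (k : ℝ) * b + dist x v ^ 2 / (2 * lam) := by
      intro k hk1
      induction k, hk1 using Nat.le_induction with
      | base =>
        have h := (hkey 0).2
        have h0 : seq 0 = x := rfl
        rw [h0] at h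
        push_cast
        linarith
      | succ k hk ih =>
        have hkR : (0 : ℝ) ≤ (k : ℝ) := Nat.cast_nonneg _
        have hm : (f (seq (k + 1))).toReal ≤ (f (seq k)).toReal := by
          obtain ⟨j, rfl⟩ := Nat.exists_eq_add_of_le hk
          rw [show 1 + j + 1 = j + 2 from by omega, show 1 + j = j + 1 from by omega]
          exact hmono j
        have h := (hkey k).2
        have hmul : (k : ℝ) * (f (seq (k + 1))).toReal ≤ (k : ℝ) * (f (seq k)).toReal :=
          mul_le_mul_of_nonneg_left hm hkR
        push_cast
        nlinarith [ih]
    have hfin := ind n hn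
    have hne : f (seq n) ≠ ⊤ := by
      obtain ⟨j, rfl⟩ := Nat.exists_eq_add_of_le hn
      rw [show 1 + j = j + 1 from by omega]
      exact (hkey j).1
    have hFeq : F n = seq n := rfl
    refine ⟨by rw [hFeq]; exact hne, ?_⟩
    rw [hFeq]
    -- convert lam = t/n
    have hdiv : ∀ d : ℝ, d / (2 * lam) = (n : ℝ) * d / (2 * t) := by
      intro d
      rw [hlamdef]
      field_simp
    rw [hdiv, hdiv] at hfin
    exact (mul_le_mul_iff_right₀ hn').mp (by ring_nf at hfin ⊢; linarith [hfin])
  -- limit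
  have hFt : Tendsto F atTop (nhds (S t x)) := hS t ht.le x hx
  set c : ℝ := b + (dist x v ^ 2 - dist (S t x) v ^ 2) / (2 * t) with hcdef
  have claim : f (S t x) ≤ (c : EReal) := by
    by_contra hcon
    push_neg at hcon
    obtain ⟨q, hq1, hq2⟩ := EReal.exists_between_coe_real hcon
    have hev1 : ∀ᶠ n in atTop, (q : EReal) < f (F n) := hFt.eventually (hlsc (S t x) _ hq2)
    have hev2 : ∀ᶠ n : ℕ in atTop, q ≤ b + (dist x v ^ 2 - dist (F n) v ^ 2) / (2 * t) := by
      filter_upwards [hev1, eventually_ge_atTop 1] with n h1 hn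
      obtain ⟨hne, hineq⟩ := main n hn
      have : (q : EReal) < ((b + (dist x v ^ 2 - dist (F n) v ^ 2) / (2 * t) : ℝ) : EReal) := by
        refine lt_of_lt_of_le h1 ?_
        rw [show f (F n) = ((f (F n)).toReal : EReal) from (EReal.coe_toReal hne (hbot _)).symm]
        exact_mod_cast (by rw [sub_div]; linarith : (f (F n)).toReal ≤ b + (dist x v ^ 2 - dist (F n) v ^ 2) / (2 * t))
      exact (EReal.coe_lt_coe_iff.mp this).le
    have hg : Tendsto (fun n : ℕ => b + (dist x v ^ 2 - dist (F n) v ^ 2) / (2 * t))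
        atTop (nhds c) := by
      rw [hcdef]
      exact Tendsto.const_add _ (((tendsto_const_nhds.sub
        ((hFt.dist tendsto_const_nhds).pow 2)).div_const _))
    have : q ≤ c := ge_of_tendsto hg hev2
    have : c < q := EReal.coe_lt_coe_iff.mp hq1
    linarith
  calc ((dist (S t x) v ^ 2 / (2 * t) - dist x v ^ 2 / (2 * t) : ℝ) : EReal) + f (S t x)
      ≤ ((dist (S t x) v ^ 2 / (2 * t) - dist x v ^ 2 / (2 * t) : ℝ) : EReal) + (c : EReal) :=
        add_le_add_right claim _
    _ = ((dist (S t x) v ^ 2 / (2 * t) - dist x v ^ 2 / (2 * t) + c : ℝ) : EReal) := by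
        rw [← EReal.coe_add]
    _ = (b : EReal) := by
        congr 1
        rw [hcdef]
        field_simp
        ring
    _ = f v := hv'.symm
end

section
/- Let H be a Hadamard space, f = Σ_{j=1}^k f_j with each f_j : H → (−∞,∞] proper convex lsc and dom f ≠ ∅. Fix λ, ρ > 0 and x ∈ H. Let x₀ be a point satisfying x₀ = (1/(1+λ/ρ)) x ⊕ ((λ/ρ)/(1+λ/ρ)) x_k, where x_j = J_ρ^j(x_{j−1}) for j = 1,…,k and J_ρ^j is the resolvent of f_j. Then for every v ∈ dom f: 2λ f(v) ≥ 2λ Σ_{j=1}^k f_j(x_j) + d(x₀, x)² + d(x₀, v)² − d(x, v)². -/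
open Metric Filter Set

variable {H : Type*} [MetricSpace H]

lemma resolvent_key (G : Hadamard H) (f : H → EReal) (hbot : ∀ x, f x ≠ ⊥)
    (hconv : GConvexFn G f) (ρ : ℝ) (hρ : 0 < ρ) (y w v : H)
    (hres : IsResolvent f ρ y w) (hv : f v ≠ ⊤) (hw : f w ≠ ⊤) :
    (f w).toReal + (dist y w ^ 2 - dist y v ^ 2 + dist w v ^ 2) / (2 * ρ)
      ≤ (f v).toReal := by
  set a := (f w).toReal with ha
  set b := (f v).toReal with hb
  have hwc : f w = (a : EReal) := (EReal.coe_toReal hw (hbot w)).symm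
  have hvc : f v = (b : EReal) := (EReal.coe_toReal hv (hbot v)).symm
  set c1 := dist y w ^ 2 with hc1
  set c2 := dist y v ^ 2 with hc2
  set c3 := dist w v ^ 2 with hc3
  have hc3n : 0 ≤ c3 := sq_nonneg _
  have h2ρ : (0:ℝ) < 2 * ρ := by linarith
  have hstep : ∀ s : ℝ, 0 < s → s ≤ 1 →
      2 * ρ * a + (c1 - c2 + c3) ≤ 2 * ρ * b + s * c3 := by
    intro s hs0 hs1
    set z := G.comb w v s with hz
    have hmem : s ∈ Set.Icc (0:ℝ) 1 := ⟨le_of_lt hs0, hs1⟩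
    have h1 := hres z
    have h2 := hconv w v s hmem
    rw [hwc] at h1 h2; rw [hvc] at h2
    have h3 : (a : EReal) + ((c1 / (2 * ρ) : ℝ) : EReal)
        ≤ (((1 - s) * a + s * b : ℝ) : EReal) + ((dist y z ^ 2 / (2 * ρ) : ℝ) : EReal) := by
      refine h1.trans (add_le_add ?_ le_rfl)
      refine h2.trans ?_
      push_cast
      rfl
    have h4 : a + c1 / (2 * ρ) ≤ (1 - s) * a + s * b + dist y z ^ 2 / (2 * ρ) := by
      exact_mod_cast h3
    have h4m : 2 * ρ * a + c1 ≤ 2 * ρ * ((1 - s) * a + s * b) + dist y z ^ 2 := by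
      have := mul_le_mul_of_nonneg_left h4 h2ρ.le
      rw [mul_add, mul_add, mul_div_cancel₀ _ (ne_of_gt h2ρ), mul_div_cancel₀ _ (ne_of_gt h2ρ)] at this
      linarith
    have h5 := G.cat0 w v y s hmem
    rw [← hz] at h5
    have hdy : dist y z ^ 2 ≤ (1 - s) * c1 + s * c2 - s * (1 - s) * c3 := h5
    nlinarith [h4m, hdy, hs0, mul_pos hs0 h2ρ]
  -- epsilon argument
  refine le_of_forall_pos_le_add ?_
  intro ε hε
  set s := min 1 (ε * (2 * ρ) / (c3 + 1)) with hs
  have hs0 : 0 < s := lt_min one_pos (by positivity)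
  have hs1 : s ≤ 1 := min_le_left _ _
  have hkey := hstep s hs0 hs1
  have hsc3 : s * c3 ≤ ε * (2 * ρ) := by
    have hsle : s ≤ ε * (2 * ρ) / (c3 + 1) := min_le_right _ _
    have h1 : s * c3 ≤ (ε * (2 * ρ) / (c3 + 1)) * c3 :=
      mul_le_mul_of_nonneg_right hsle hc3n
    have h2 : (ε * (2 * ρ) / (c3 + 1)) * c3 ≤ ε * (2 * ρ) := by
      rw [div_mul_eq_mul_div, div_le_iff₀ (by positivity : (0:ℝ) < c3 + 1)]
      nlinarith
    linarith
  have hmain : 2 * ρ * a + (c1 - c2 + c3) ≤ 2 * ρ * (b + ε) := by nlinarith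
  have : a + (c1 - c2 + c3) / (2 * ρ) ≤ b + ε := by
    rw [← mul_le_mul_iff_right₀ h2ρ, mul_add, mul_div_cancel₀ _ (ne_of_gt h2ρ)]
    linarith
  exact this

lemma ereal_coe_sum {ι : Type*} (s : Finset ι) (g : ι → ℝ) :
    ((∑ i ∈ s, g i : ℝ) : EReal) = ∑ i ∈ s, ((g i : ℝ) : EReal) := by
  induction s using Finset.cons_induction with
  | empty => simp
  | cons a s ha ih => rw [Finset.sum_cons, Finset.sum_cons, EReal.coe_add, ih]


/-- The key estimate (3.5) in the proof of the Lie–Trotter–Kato formula: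
for the resolvent chain `x_j = J_ρ^j x_{j-1}` with
`x₀ = (1/(1+λ/ρ)) x ⊕ ((λ/ρ)/(1+λ/ρ)) x_k`, one has
`2λ f(v) ≥ 2λ Σ_j f_j(x_j) + d(x₀,x)² + d(x₀,v)² − d(x,v)²`. -/
theorem resolvent_chain_estimate
    [CompleteSpace H] (G : Hadamard H) (k : ℕ)
    (f : Fin k → H → EReal)
    (hbot : ∀ j x, f j x ≠ ⊥)
    (hconv : ∀ j, GConvexFn G (f j))
    (hlsc : ∀ j, LowerSemicontinuous (f j))
    (hproper : ∃ x, ∀ j, f j x ≠ ⊤)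
    (lam ρ : ℝ) (hlam : 0 < lam) (hρ : 0 < ρ)
    (x : H) (X : ℕ → H)
    (hchain : ∀ j : Fin k, IsResolvent (f j) ρ (X j.val) (X (j.val + 1)))
    (hX0 : X 0 = G.comb x (X k) ((lam / ρ) / (1 + lam / ρ)))
    (v : H) (hv : ∀ j, f j v ≠ ⊤) :
    ((2 * lam : ℝ) : EReal) * (∑ j : Fin k, f j (X (j.val + 1)))
      + ((dist (X 0) x ^ 2 + dist (X 0) v ^ 2 - dist x v ^ 2 : ℝ) : EReal)
      ≤ ((2 * lam : ℝ) : EReal) * (∑ j : Fin k, f j v) := by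
  have h2ρ : (0:ℝ) < 2 * ρ := by linarith
  set t : ℝ := (lam / ρ) / (1 + lam / ρ) with ht_def
  have hlr : 0 < lam / ρ := div_pos hlam hρ
  have ht0 : 0 < t := div_pos hlr (by linarith)
  have ht1 : t < 1 := (div_lt_one (by linarith)).mpr (by linarith)
  have htmem : t ∈ Set.Icc (0:ℝ) 1 := ⟨le_of_lt ht0, le_of_lt ht1⟩
  have ht_eq : t * ρ = lam * (1 - t) := by
    have h1 : (1 : ℝ) + lam / ρ ≠ 0 := by positivity
    rw [ht_def]
    field_simp
    ring
  -- finiteness of f j (X (j+1))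
  have hvc : ∀ j, f j v = (((f j v).toReal : ℝ) : EReal) :=
    fun j => (EReal.coe_toReal (hv j) (hbot j v)).symm
  have hfin : ∀ j : Fin k, f j (X (j.val + 1)) ≠ ⊤ := by
    intro j hj
    have h := hchain j v
    rw [hj, hvc j] at h
    simp only [EReal.top_add_coe, top_le_iff] at h
    rw [← EReal.coe_add] at h
    exact EReal.coe_ne_top _ h
  set a : Fin k → ℝ := fun j => (f j (X (j.val + 1))).toReal with ha
  set b : Fin k → ℝ := fun j => (f j v).toReal with hb
  have hac : ∀ j, f j (X (j.val + 1)) = ((a j : ℝ) : EReal) :=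
    fun j => (EReal.coe_toReal (hfin j) (hbot j _)).symm
  have key : ∀ j : Fin k,
      a j + (dist (X j.val) (X (j.val+1)) ^ 2 - dist (X j.val) v ^ 2
        + dist (X (j.val+1)) v ^ 2) / (2 * ρ) ≤ b j :=
    fun j => resolvent_key G (f j) (hbot j) (hconv j) ρ hρ _ _ v (hchain j) (hv j) (hfin j)
  set A : ℝ := ∑ j : Fin k, a j with hA
  set B : ℝ := ∑ j : Fin k, b j with hB
  set S : ℝ := ∑ j : Fin k, dist (X j.val) (X (j.val+1)) ^ 2 with hS_def
  have hS : 0 ≤ S := Finset.sum_nonneg fun j _ => sq_nonneg _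
  have htel : ∑ j : Fin k, (dist (X (j.val+1)) v ^ 2 - dist (X j.val) v ^ 2)
      = dist (X k) v ^ 2 - dist (X 0) v ^ 2 := by
    rw [Fin.sum_univ_eq_sum_range (fun n => dist (X (n+1)) v ^ 2 - dist (X n) v ^ 2) k]
    exact Finset.sum_range_sub (fun n => dist (X n) v ^ 2) k
  have hsumineq : A + (S + dist (X k) v ^ 2 - dist (X 0) v ^ 2) / (2 * ρ) ≤ B := by
    have h1 : ∑ j : Fin k, (a j + (dist (X j.val) (X (j.val+1)) ^ 2 - dist (X j.val) v ^ 2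
        + dist (X (j.val+1)) v ^ 2) / (2 * ρ)) ≤ B :=
      Finset.sum_le_sum fun j _ => key j
    have h2 : ∑ j : Fin k, (a j + (dist (X j.val) (X (j.val+1)) ^ 2 - dist (X j.val) v ^ 2
        + dist (X (j.val+1)) v ^ 2) / (2 * ρ))
        = A + (S + dist (X k) v ^ 2 - dist (X 0) v ^ 2) / (2 * ρ) := by
      rw [Finset.sum_add_distrib, ← Finset.sum_div]
      congr 1
      have h3 : ∑ j : Fin k, (dist (X j.val) (X (j.val+1)) ^ 2 - dist (X j.val) v ^ 2
          + dist (X (j.val+1)) v ^ 2)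
          = S + ∑ j : Fin k, (dist (X (j.val+1)) v ^ 2 - dist (X j.val) v ^ 2) := by
        rw [hS_def, ← Finset.sum_add_distrib]
        exact Finset.sum_congr rfl fun j _ => by ring
      rw [h3, htel]
      ring
    linarith [h2 ▸ h1]
  have hsum3 : 2 * ρ * A + (S + dist (X k) v ^ 2 - dist (X 0) v ^ 2) ≤ 2 * ρ * B := by
    have := mul_le_mul_of_nonneg_left hsumineq h2ρ.le
    rw [mul_add, mul_div_cancel₀ _ (ne_of_gt h2ρ)] at this
    linarith
  -- CAT(0) at X 0
  have hc : dist v (X 0) ^ 2 ≤ (1 - t) * dist v x ^ 2 + t * dist v (X k) ^ 2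
      - t * (1 - t) * dist x (X k) ^ 2 := by
    rw [hX0]; exact G.cat0 x (X k) v t htmem
  have hdl : dist x (X 0) = t * dist x (X k) := by
    rw [hX0]; exact G.dist_comb_left x (X k) t htmem
  -- reduce goal to reals
  have hsumA : (∑ j : Fin k, f j (X (j.val + 1))) = ((A : ℝ) : EReal) := by
    rw [hA, ereal_coe_sum]
    exact Finset.sum_congr rfl fun j _ => hac j
  have hsumB : (∑ j : Fin k, f j v) = ((B : ℝ) : EReal) := by
    rw [hB, ereal_coe_sum]
    exact Finset.sum_congr rfl fun j _ => hvc j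
  rw [hsumA, hsumB, ← EReal.coe_mul, ← EReal.coe_mul, ← EReal.coe_add, EReal.coe_le_coe_iff]
  -- final real inequality
  have hd1 : dist v (X 0) = dist (X 0) v := dist_comm _ _
  have hd2 : dist v x = dist x v := dist_comm _ _
  have hd3 : dist v (X k) = dist (X k) v := dist_comm _ _
  have hd4 : dist x (X 0) = dist (X 0) x := dist_comm _ _
  rw [hd1, hd2, hd3] at hc
  rw [hd4] at hdl
  set P := dist (X 0) v ^ 2
  set Q := dist x v ^ 2
  set R := dist (X k) v ^ 2
  set D := dist x (X k)
  have hi : t * (2 * ρ * A) + t * (S + R - P) ≤ t * (2 * ρ * B) := by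
    nlinarith [hsum3, ht0]
  have eA : t * (2 * ρ * A) = 2 * (lam * (1 - t)) * A := by rw [← ht_eq]; ring
  have eB : t * (2 * ρ * B) = 2 * (lam * (1 - t)) * B := by rw [← ht_eq]; ring
  have hi' : 2 * (lam * (1 - t)) * A + t * (S + R - P) ≤ 2 * (lam * (1 - t)) * B := by
    rw [← eA, ← eB]; exact hi
  have h1t : (0:ℝ) < 1 - t := by linarith
  rw [hdl]
  nlinarith [hi', hc, hS, ht0, h1t, sq_nonneg D, mul_nonneg ht0.le hS,
    mul_nonneg (mul_nonneg ht0.le (sq_nonneg (1 - t))) (sq_nonneg D)]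
end

section
/- Let H be a Hadamard space and f = Σ_{j=1}^k f_j with each f_j : H → (−∞,∞] proper convex lsc. For ρ > 0 let x₀(ρ) ∈ H and define x_j(ρ) = S_ρ^j(P_j(x_{j−1}(ρ))) for j = 1,…,k, where S_ρ^j is the gradient flow semigroup of f_j and P_j the projection onto cl(dom f_j). Then for every v ∈ dom f: f(v) ≥ (1/(2ρ)) d(x_k(ρ), v)² − (1/(2ρ)) d(x₀(ρ), v)² + Σ_{j=1}^k f_j(x_j(ρ)). -/
open Metric Filter Set

variable {H : Type*} [MetricSpace H]

section AuxLemmas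

variable {H : Type*} [MetricSpace H]

private lemma sq_le_sq_of_le {a b : ℝ} (ha : 0 ≤ a) (hb : 0 ≤ b) (h : a ^ 2 ≤ b ^ 2) :
    a ≤ b := by nlinarith

private lemma coe_sum_fin {k : ℕ} (g : Fin k → ℝ) :
    ((∑ j, g j : ℝ) : EReal) = ∑ j, ((g j : ℝ) : EReal) := by
  induction (Finset.univ : Finset (Fin k)) using Finset.cons_induction with
  | empty => simp
  | cons a s ha ih => rw [Finset.sum_cons, Finset.sum_cons, EReal.coe_add, ih]

/-- The geodesic combination is `(1-t)`-Lipschitz in its first argument. -/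
private lemma comb_lipschitz (G : Hadamard H) (x x' y : H) {t : ℝ}
    (ht : t ∈ Set.Icc (0:ℝ) 1) :
    dist (G.comb x y t) (G.comb x' y t) ≤ (1 - t) * dist x x' := by
  have h1 := G.cat0 x y (G.comb x' y t) t ht
  have h2 := G.cat0 x' y x t ht
  have h3 := G.dist_comb_right x' y t ht
  rw [dist_comm (G.comb x' y t) x] at h1
  have hsq : dist (G.comb x' y t) (G.comb x y t) ^ 2 ≤ ((1 - t) * dist x x') ^ 2 := by
    have h1t : (0:ℝ) ≤ 1 - t := by linarith [ht.2]
    have h2' := mul_le_mul_of_nonneg_left h2 h1t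
    rw [h3] at h1
    nlinarith [h1, h2']
  rw [dist_comm]
  exact sq_le_sq_of_le dist_nonneg (mul_nonneg (by linarith [ht.2]) dist_nonneg) hsq

/-- The geodesic from a point of the closure of the domain to a point of the
domain stays in the closure of the domain. -/
private lemma comb_mem_closure_dom (G : Hadamard H) {f : H → EReal}
    (hbot : ∀ x, f x ≠ ⊥) (hconv : GConvexFn G f)
    {p v : H} (hp : p ∈ closure {z : H | f z ≠ ⊤}) (hv : f v ≠ ⊤)
    {t : ℝ} (ht : t ∈ Set.Icc (0:ℝ) 1) :
    G.comb p v t ∈ closure {z : H | f z ≠ ⊤} := by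
  have hcont : Continuous (fun q : H => G.comb q v t) := by
    refine (LipschitzWith.of_dist_le_mul (K := 1) fun a b => ?_).continuous
    calc dist (G.comb a v t) (G.comb b v t) ≤ (1 - t) * dist a b := comb_lipschitz G a b v ht
      _ ≤ 1 * dist a b := by
          have := dist_nonneg (x := a) (y := b); nlinarith [ht.1]
      _ = (1 : NNReal) * dist a b := by norm_num
  have hmap : Set.MapsTo (fun q : H => G.comb q v t) {z : H | f z ≠ ⊤} {z : H | f z ≠ ⊤} := by
    intro q hq
    simp only [Set.mem_setOf_eq] at hq ⊢
    have h := hconv q v t ht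
    rw [← EReal.coe_toReal hq (hbot q), ← EReal.coe_toReal hv (hbot v),
      ← EReal.coe_mul, ← EReal.coe_mul, ← EReal.coe_add] at h
    intro hT
    rw [hT] at h
    exact (EReal.coe_lt_top _).not_ge h
  exact hmap.closure hcont hp

/-- The metric projection onto the closure of the domain is nonexpansive towards
points of the domain. -/
private lemma proj_dist_le (G : Hadamard H) {f : H → EReal}
    (hbot : ∀ x, f x ≠ ⊥) (hconv : GConvexFn G f)
    {y p v : H} (hpmem : p ∈ closure {z : H | f z ≠ ⊤})
    (hmin : ∀ c ∈ closure {z : H | f z ≠ ⊤}, dist y p ≤ dist y c)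
    (hv : f v ≠ ⊤) :
    dist p v ≤ dist y v := by
  have key : ∀ t : ℝ, t ∈ Set.Ioc (0:ℝ) 1 → (1 - t) * dist p v ^ 2 ≤ dist y v ^ 2 := by
    intro t ht
    have ht' : t ∈ Set.Icc (0:ℝ) 1 := ⟨ht.1.le, ht.2⟩
    have hz := comb_mem_closure_dom G hbot hconv hpmem hv ht'
    have h1 : dist y p ≤ dist y (G.comb p v t) := hmin _ hz
    have h1' : dist y p ^ 2 ≤ dist y (G.comb p v t) ^ 2 := by
      nlinarith [dist_nonneg (x := y) (y := p)]
    have h2 := G.cat0 p v y t ht'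
    -- t * dyp² + t(1-t) dpv² ≤ t * dyv²
    have h3 : t * ((1 - t) * dist p v ^ 2) ≤ t * dist y v ^ 2 := by nlinarith [ht.1]
    have := (mul_le_mul_iff_right₀ ht.1).mp h3
    nlinarith [sq_nonneg (dist y p)]
  have hsq : dist p v ^ 2 ≤ dist y v ^ 2 := by
    refine le_of_forall_pos_le_add fun ε hε => ?_
    set c := dist p v ^ 2 with hcdef
    have hc : 0 ≤ c := sq_nonneg _
    set t := min 1 (ε / (c + 1)) with htdef
    have htpos : 0 < t := lt_min one_pos (div_pos hε (by linarith))
    have ht1 : t ≤ 1 := min_le_left _ _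
    have h := key t ⟨htpos, ht1⟩
    have htc : t * (c + 1) ≤ ε := by
      have h1 : t ≤ ε / (c + 1) := min_le_right _ _
      calc t * (c + 1) ≤ (ε / (c + 1)) * (c + 1) :=
            mul_le_mul_of_nonneg_right h1 (by linarith)
        _ = ε := div_mul_cancel₀ ε (by linarith)
    nlinarith
  exact sq_le_sq_of_le dist_nonneg dist_nonneg hsq

/-- The discrete EVI inequality for a single resolvent step. -/
private lemma resolvent_step (G : Hadamard H) {f : H → EReal}
    (hbot : ∀ x, f x ≠ ⊥) (hconv : GConvexFn G f)
    {lam : ℝ} (hlam : 0 < lam) {x y v : H} (hv : f v ≠ ⊤)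
    (hy : IsResolvent f lam x y) :
    f y ≠ ⊤ ∧ 2 * lam * (f y).toReal + dist x y ^ 2 + dist y v ^ 2
      ≤ 2 * lam * (f v).toReal + dist x v ^ 2 := by
  set b := (f v).toReal with hbdef
  have hvb : f v = (b : EReal) := (EReal.coe_toReal hv (hbot v)).symm
  have htop : f y ≠ ⊤ := by
    intro hT
    have h := hy v
    rw [hT, hvb, ← EReal.coe_add] at h
    have h2 : (⊤ : EReal) ≤ ((b + dist x v ^ 2 / (2 * lam) : ℝ) : EReal) := by
      refine le_trans ?_ h
      rw [EReal.top_add_of_ne_bot (by exact EReal.coe_ne_bot _)]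
    exact (EReal.coe_lt_top _).not_ge h2
  set a := (f y).toReal with hadef
  have hya : f y = (a : EReal) := (EReal.coe_toReal htop (hbot y)).symm
  have h2l : (0:ℝ) < 2 * lam := by linarith
  have key : ∀ t : ℝ, t ∈ Set.Ioc (0:ℝ) 1 →
      2 * lam * a + dist x y ^ 2 + (1 - t) * dist y v ^ 2
        ≤ 2 * lam * b + dist x v ^ 2 := by
    intro t ht
    have ht' : t ∈ Set.Icc (0:ℝ) 1 := ⟨ht.1.le, ht.2⟩
    have hzc := hconv y v t ht'
    rw [hya, hvb, ← EReal.coe_mul, ← EReal.coe_mul, ← EReal.coe_add] at hzc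
    have hz := le_trans (hy (G.comb y v t)) (add_le_add hzc le_rfl)
    rw [hya, ← EReal.coe_add, ← EReal.coe_add] at hz
    have hz' : a + dist x y ^ 2 / (2 * lam)
        ≤ (1 - t) * a + t * b + dist x (G.comb y v t) ^ 2 / (2 * lam) :=
      EReal.coe_le_coe_iff.mp hz
    have h4 := mul_le_mul_of_nonneg_right hz' h2l.le
    rw [add_mul, add_mul, add_mul, div_mul_cancel₀ _ (ne_of_gt h2l),
      div_mul_cancel₀ _ (ne_of_gt h2l)] at h4
    have hcat := G.cat0 y v x t ht'
    -- multiply goal by t > 0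
    have hgoal : t * (2 * lam * a + dist x y ^ 2 + (1 - t) * dist y v ^ 2)
        ≤ t * (2 * lam * b + dist x v ^ 2) := by nlinarith [h4, hcat]
    exact (mul_le_mul_iff_right₀ ht.1).mp hgoal
  refine ⟨htop, ?_⟩
  refine le_of_forall_pos_le_add fun ε hε => ?_
  set c := dist y v ^ 2 with hcdef
  have hc : 0 ≤ c := sq_nonneg _
  set t := min 1 (ε / (c + 1)) with htdef
  have htpos : 0 < t := lt_min one_pos (div_pos hε (by linarith))
  have h := key t ⟨htpos, min_le_left _ _⟩
  have htc : t * (c + 1) ≤ ε := by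
    have h1 : t ≤ ε / (c + 1) := min_le_right _ _
    calc t * (c + 1) ≤ (ε / (c + 1)) * (c + 1) :=
          mul_le_mul_of_nonneg_right h1 (by linarith)
      _ = ε := div_mul_cancel₀ ε (by linarith)
  nlinarith

/-- The EVI inequality for the semigroup obtained as limit of iterated resolvents. -/
private lemma semigroup_evi (G : Hadamard H) {f : H → EReal}
    (hbot : ∀ x, f x ≠ ⊥) (hconv : GConvexFn G f) (hlsc : LowerSemicontinuous f)
    {t : ℝ} (ht : 0 < t) {J : ℝ → H → H}
    (hJ : ∀ lam > (0:ℝ), ∀ y : H, IsResolvent f lam y (J lam y))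
    {y S v : H} (hv : f v ≠ ⊤)
    (hS : Filter.Tendsto (fun n : ℕ => (J (t / (n : ℝ)))^[n] y) Filter.atTop (nhds S)) :
    f S ≠ ⊤ ∧ 2 * t * (f S).toReal + dist S v ^ 2
      ≤ 2 * t * (f v).toReal + dist y v ^ 2 := by
  set b := (f v).toReal with hbdef
  set z : ℕ → H := fun n => (J (t / (n : ℝ)))^[n] y with hzdef
  have main : ∀ n : ℕ, 1 ≤ n → f (z n) ≠ ⊤ ∧
      dist (z n) v ^ 2 + 2 * t * (f (z n)).toReal ≤ dist y v ^ 2 + 2 * t * b := by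
    intro n hn
    have hnpos : (0:ℝ) < (n : ℝ) := by exact_mod_cast hn
    set lam := t / (n : ℝ) with hlamdef
    have hlam : 0 < lam := div_pos ht hnpos
    have claim : ∀ m : ℕ, 1 ≤ m → f ((J lam)^[m] y) ≠ ⊤ ∧
        dist ((J lam)^[m] y) v ^ 2 + 2 * lam * (m : ℝ) * (f ((J lam)^[m] y)).toReal
          ≤ dist y v ^ 2 + 2 * lam * (m : ℝ) * b := by
      intro m hm
      induction m, hm using Nat.le_induction with
      | base =>
        have h1 := resolvent_step G hbot hconv hlam hv (hJ lam hlam y)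
        simp only [Function.iterate_one]
        refine ⟨h1.1, ?_⟩
        push_cast
        nlinarith [h1.2, sq_nonneg (dist y (J lam y))]
      | succ m hm ih =>
        set xm := (J lam)^[m] y with hxmdef
        have hit : (J lam)^[m + 1] y = J lam xm := Function.iterate_succ_apply' _ _ _
        rw [hit]
        have h1 := resolvent_step G hbot hconv hlam hv (hJ lam hlam xm)
        have h2 := resolvent_step G hbot hconv hlam ih.1 (hJ lam hlam xm)
        refine ⟨h1.1, ?_⟩
        have hmono : (f (J lam xm)).toReal ≤ (f xm).toReal := by
          have h22 := h2.2
          rw [dist_self] at h22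
          nlinarith [sq_nonneg (dist xm (J lam xm)), sq_nonneg (dist (J lam xm) xm)]
        have hm0 : (0:ℝ) ≤ (m : ℝ) := Nat.cast_nonneg m
        have hmul := mul_le_mul_of_nonneg_left hmono
          (by positivity : (0:ℝ) ≤ 2 * lam * (m : ℝ))
        push_cast
        nlinarith [h1.2, ih.2, hmul, sq_nonneg (dist xm (J lam xm))]
    have hln : 2 * lam * (n : ℝ) = 2 * t := by
      rw [hlamdef]; field_simp
    have h := claim n hn
    rw [hln] at h
    exact h
  have hdist : Filter.Tendsto (fun n => dist (z n) v ^ 2) Filter.atTop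
      (nhds (dist S v ^ 2)) := (hS.dist tendsto_const_nhds).pow 2
  set c := (dist y v ^ 2 + 2 * t * b - dist S v ^ 2) / (2 * t) with hcdef
  have h2t : (0:ℝ) < 2 * t := by linarith
  have hfS : f S ≤ (c : EReal) := by
    by_contra hlt
    obtain ⟨c', h1, h2⟩ := EReal.exists_between_coe_real (not_le.mp hlt)
    have hcc' : c < c' := EReal.coe_lt_coe_iff.mp h1
    have hev1 : ∀ᶠ n in Filter.atTop, (c' : EReal) < f (z n) :=
      hS.eventually (hlsc S _ h2)
    have hev2 : ∀ᶠ n in Filter.atTop,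
        dist S v ^ 2 - 2 * t * (c' - c) < dist (z n) v ^ 2 :=
      hdist.eventually (eventually_gt_nhds (by nlinarith))
    obtain ⟨n, ⟨hn1, hn2⟩, hn3⟩ :=
      ((hev1.and hev2).and (Filter.eventually_ge_atTop 1)).exists
    have hm := main n hn3
    have hfz : c' < (f (z n)).toReal := by
      rw [← EReal.coe_toReal hm.1 (hbot _)] at hn1
      exact_mod_cast hn1
    have h2tc : 2 * t * c = dist y v ^ 2 + 2 * t * b - dist S v ^ 2 := by
      rw [hcdef]; field_simp
    nlinarith [hm.2]
  have hfStop : f S ≠ ⊤ := ne_top_of_le_ne_top (EReal.coe_ne_top c) hfS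
  refine ⟨hfStop, ?_⟩
  have htr : (f S).toReal ≤ c := by
    have := EReal.toReal_le_toReal hfS (hbot S) (EReal.coe_ne_top c)
    rwa [EReal.toReal_coe] at this
  have h2tc : 2 * t * c = dist y v ^ 2 + 2 * t * b - dist S v ^ 2 := by
    rw [hcdef]; field_simp
  nlinarith [mul_le_mul_of_nonneg_left htr h2t.le]

end AuxLemmas

/-- The summed EVI estimate for the semigroup-projection chain
`x_j = S_ρ^j (P_j x_{j-1})`:
`f(v) ≥ d(x_k,v)²/(2ρ) − d(x₀,v)²/(2ρ) + Σ_j f_j(x_j)`. -/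
theorem semigroup_projection_chain_estimate
    [CompleteSpace H] (G : Hadamard H) (k : ℕ)
    (f : Fin k → H → EReal)
    (hbot : ∀ j x, f j x ≠ ⊥)
    (hconv : ∀ j, GConvexFn G (f j))
    (hlsc : ∀ j, LowerSemicontinuous (f j))
    (hproper : ∀ j, ∃ x, f j x ≠ ⊤)
    (ρ : ℝ) (hρ : 0 < ρ)
    (Jj : Fin k → ℝ → H → H)
    (hJj : ∀ j, ∀ lam > (0:ℝ), ∀ y : H, IsResolvent (f j) lam y (Jj j lam y))
    (hJj0 : ∀ j, ∀ y : H, Jj j 0 y = y)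
    (Sj : Fin k → ℝ → H → H)
    (hSj : ∀ j, ∀ t ≥ (0:ℝ), ∀ y ∈ closure {z : H | f j z ≠ ⊤},
      Tendsto (fun n : ℕ => (Jj j (t / (n : ℝ)))^[n] y) atTop (nhds (Sj j t y)))
    (P : Fin k → H → H)
    (hP : ∀ j, ∀ y : H, P j y ∈ closure {z : H | f j z ≠ ⊤} ∧
      ∀ c ∈ closure {z : H | f j z ≠ ⊤}, dist y (P j y) ≤ dist y c)
    (X : ℕ → H)
    (hX : ∀ j : Fin k, X (j.val + 1) = Sj j ρ (P j (X j.val)))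
    (v : H) (hv : ∀ j, f j v ≠ ⊤) :
    ((dist (X k) v ^ 2 / (2 * ρ) - dist (X 0) v ^ 2 / (2 * ρ) : ℝ) : EReal)
      + (∑ j : Fin k, f j (X (j.val + 1)))
      ≤ ∑ j : Fin k, f j v := by
  have h2ρ : (0:ℝ) < 2 * ρ := by linarith
  have hstep : ∀ j : Fin k, f j (X (j.val + 1)) ≠ ⊤ ∧
      dist (X (j.val + 1)) v ^ 2 / (2 * ρ) - dist (X j.val) v ^ 2 / (2 * ρ)
        + (f j (X (j.val + 1))).toReal ≤ (f j v).toReal := by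
    intro j
    have hPm := hP j (X j.val)
    have hT := hSj j ρ hρ.le _ hPm.1
    rw [← hX j] at hT
    have he := semigroup_evi G (hbot j) (hconv j) (hlsc j) hρ (hJj j) (hv j) hT
    have hproj : dist (P j (X j.val)) v ≤ dist (X j.val) v :=
      proj_dist_le G (hbot j) (hconv j) hPm.1 hPm.2 (hv j)
    refine ⟨he.1, ?_⟩
    have hsq : dist (P j (X j.val)) v ^ 2 ≤ dist (X j.val) v ^ 2 := by
      nlinarith [dist_nonneg (x := P j (X j.val)) (y := v)]
    rw [← sub_div, ← le_sub_iff_add_le, div_le_iff₀ h2ρ]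
    nlinarith [he.2, hsq]
  have e1 : (∑ j : Fin k, f j (X (j.val + 1)))
      = ((∑ j : Fin k, (f j (X (j.val + 1))).toReal : ℝ) : EReal) := by
    rw [coe_sum_fin]
    exact Finset.sum_congr rfl fun j _ => (EReal.coe_toReal (hstep j).1 (hbot j _)).symm
  have e2 : (∑ j : Fin k, f j v) = ((∑ j : Fin k, (f j v).toReal : ℝ) : EReal) := by
    rw [coe_sum_fin]
    exact Finset.sum_congr rfl fun j _ => (EReal.coe_toReal (hv j) (hbot j v)).symm
  rw [e1, e2, ← EReal.coe_add, EReal.coe_le_coe_iff]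
  have tele : ∑ j : Fin k,
      (dist (X (j.val + 1)) v ^ 2 / (2 * ρ) - dist (X j.val) v ^ 2 / (2 * ρ))
        = dist (X k) v ^ 2 / (2 * ρ) - dist (X 0) v ^ 2 / (2 * ρ) := by
    rw [Fin.sum_univ_eq_sum_range
      (fun i => dist (X (i + 1)) v ^ 2 / (2 * ρ) - dist (X i) v ^ 2 / (2 * ρ)) k,
      Finset.sum_range_sub (fun i => dist (X i) v ^ 2 / (2 * ρ))]
  have hsum := Finset.sum_le_sum (fun j (_ : j ∈ Finset.univ) => (hstep j).2)
  rw [Finset.sum_add_distrib, tele] at hsum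
  linarith [hsum]
end
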